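/- arXiv:0911.4433 — 6 statements merged into one kernel-verified Lean document; each statement's English description precedes it below -/
import Mathlib

section
/- Let p be an odd prime and let n be a positive integer such that p − 1 does not divide 6n. Then ∑_{k=1}^{p-1} H_{k,2n}²/k^{2n} ≡ 0 (mod p). -/
/-!
Work in `ZMod p` with `x_k = k^{-2n}` and `A_k = x_1 + ⋯ + x_k`. Power sums of the nonzero
residues vanish unless `p - 1` divides the exponent, so `A_{p-1} = ∑ x_k = 0` and `∑ x_k³ = 0`;
and `x_{p-k} = x_k` since the exponent is even. The reflection `k ↦ p - k` therefore sends
`A_k` to `-A_{k-1}`, whence `∑ A_k² x_k = ∑ A_{k-1}² x_k`; expanding `A_k = A_{k-1} + x_k` gives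
`2 ∑ A_{k-1} x_k² = 0`, and telescoping `∑ (A_k³ - A_{k-1}³) = A_{p-1}³ = 0` then gives
`3 ∑ A_{k-1}² x_k = 0`. As `p - 1 ∤ 6`, we have `p ≥ 5`, so 2 and 3 can be cancelled.

The rational sum is carried to `ZMod p` through `ℤ_[p]`, which maps to both `ℚ_[p]` and `ZMod p`:
the same expression in the `p`-adic inverses of `1, …, p - 1` is the image of the rational sum in
`ℚ_[p]`, and reduces to zero in `ZMod p`, so its `p`-adic norm is below 1.
-/

open Finset

section PartialSums

variable {K : Type*} [CommRing K] [NoZeroDivisors K]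

theorem sum_range_partialSum_sq_mul_eq_zero (h2 : (2 : K) ≠ 0) (h3 : (3 : K) ≠ 0)
    {g : ℕ → K} {N : ℕ} (hsym : ∀ k < N, g (N - 1 - k) = g k)
    (hsum : ∑ k ∈ range N, g k = 0) (hcube : ∑ k ∈ range N, g k ^ 3 = 0) :
    ∑ k ∈ range N, (∑ j ∈ range (k + 1), g j) ^ 2 * g k = 0 := by
  set a : ℕ → K := fun k ↦ ∑ j ∈ range k, g j
  have ha_succ (k : ℕ) : a (k + 1) = a k + g k := sum_range_succ g k
  have ha_reflect : ∀ k ≤ N, a (N - k) = -a k := by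
    intro k
    induction k with
    | zero => simpa [a] using hsum
    | succ k ih =>
      intro hk
      have h := ha_succ (N - (k + 1))
      rw [show N - (k + 1) + 1 = N - k by omega, ih (by omega),
        show N - (k + 1) = N - 1 - k by omega, hsym k (by omega)] at h
      rw [show N - (k + 1) = N - 1 - k by omega, ha_succ]
      linear_combination -h
  set S' := ∑ k ∈ range N, a k ^ 2 * g k
  set U := ∑ k ∈ range N, a k * g k ^ 2
  have h_reflect : ∑ k ∈ range N, a (k + 1) ^ 2 * g k = S' := by
    rw [← sum_range_reflect]
    refine sum_congr rfl fun k hk ↦ ?_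
    have hk := mem_range.mp hk
    rw [hsym k hk, show N - 1 - k + 1 = N - k by omega, ha_reflect k hk.le, neg_sq]
  have h_expand : ∑ k ∈ range N, a (k + 1) ^ 2 * g k
      = S' + 2 * U + ∑ k ∈ range N, g k ^ 3 := by
    simp only [S', U, mul_sum, ← sum_add_distrib, ha_succ]
    exact sum_congr rfl fun k _ ↦ by ring
  have h_telescope : a N ^ 3 - a 0 ^ 3 = 3 * S' + 3 * U + ∑ k ∈ range N, g k ^ 3 := by
    rw [← sum_range_sub (fun k ↦ a k ^ 3)]
    simp only [S', U, mul_sum, ← sum_add_distrib, ha_succ]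
    exact sum_congr rfl fun k _ ↦ by ring
  have hU : U = 0 := by
    refine (mul_eq_zero.mp ?_).resolve_left h2
    linear_combination h_expand.symm.trans h_reflect - hcube
  have hS' : S' = 0 := by
    refine (mul_eq_zero.mp ?_).resolve_left h3
    have haN : a N = 0 := hsum
    simp only [haN, a, range_zero, sum_empty] at h_telescope
    linear_combination -h_telescope - 3 * hU - hcube
  exact h_reflect.trans hS'

theorem sum_Icc_one_eq_sum_range {M : Type*} [AddCommMonoid M] (f : ℕ → M) (N : ℕ) :
    ∑ k ∈ Icc 1 N, f k = ∑ k ∈ range N, f (k + 1) := by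
  rw [range_eq_Ico, sum_Ico_add' f 0 N 1, zero_add, Ico_add_one_right_eq_Icc]

def sumPartialSumSqMul {R : Type*} [CommSemiring R] (x : ℕ → R) (N : ℕ) : R :=
  ∑ k ∈ Icc 1 N, (∑ j ∈ Icc 1 k, x j) ^ 2 * x k

theorem sumPartialSumSqMul_congr {R : Type*} [CommSemiring R] {x y : ℕ → R} {N : ℕ}
    (h : ∀ j ∈ Icc 1 N, x j = y j) : sumPartialSumSqMul x N = sumPartialSumSqMul y N := by
  refine sum_congr rfl fun k hk ↦ ?_
  rw [h k hk, sum_congr rfl fun j hj ↦ h j (Icc_subset_Icc_right (mem_Icc.mp hk).2 hj)]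

theorem map_sumPartialSumSqMul {R S : Type*} [CommSemiring R] [CommSemiring S] (φ : R →+* S)
    (x : ℕ → R) (N : ℕ) :
    φ (sumPartialSumSqMul x N) = sumPartialSumSqMul (fun j ↦ φ (x j)) N := by
  simp [sumPartialSumSqMul, map_sum]

theorem sumPartialSumSqMul_eq_zero (h2 : (2 : K) ≠ 0) (h3 : (3 : K) ≠ 0) {x : ℕ → K} {N : ℕ}
    (hsym : ∀ k ∈ Icc 1 N, x (N + 1 - k) = x k)
    (hsum : ∑ k ∈ Icc 1 N, x k = 0) (hcube : ∑ k ∈ Icc 1 N, x k ^ 3 = 0) :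
    sumPartialSumSqMul x N = 0 := by
  simp only [sumPartialSumSqMul, sum_Icc_one_eq_sum_range] at hsum hcube ⊢
  refine sum_range_partialSum_sq_mul_eq_zero h2 h3 (fun k hk ↦ ?_) hsum hcube
  rw [show N - 1 - k + 1 = N + 1 - (k + 1) by omega]
  exact hsym (k + 1) (mem_Icc.mpr ⟨by omega, by omega⟩)

end PartialSums

namespace PadicInt

variable {p : ℕ} [Fact p.Prime]

theorem map_inv_of_norm_eq_one {K : Type*} [DivisionRing K] (φ : ℤ_[p] →+* K) {z : ℤ_[p]}
    (hz : ‖z‖ = 1) : φ z.inv = (φ z)⁻¹ :=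
  eq_inv_of_mul_eq_one_right (by rw [← map_mul, mul_inv hz, map_one])

theorem norm_lt_one_of_toZMod_eq_zero {z : ℤ_[p]} (hz : toZMod z = 0) : ‖z‖ < 1 :=
  mem_nonunits.mp <| by rw [← IsLocalRing.mem_maximalIdeal, ← ker_toZMod]; exact hz

end PadicInt

theorem Padic.dvd_num_of_norm_lt_one {p : ℕ} [Fact p.Prime] {q : ℚ} (hq : ‖(q : ℚ_[p])‖ < 1) :
    (p : ℤ) ∣ q.num := by
  rw [← Padic.norm_intCast_lt_one_iff]
  calc ‖(q.num : ℚ_[p])‖ = ‖(q : ℚ_[p])‖ * ‖(q.den : ℚ_[p])‖ := by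
        rw [← norm_mul]; congr 1; exact_mod_cast q.mul_den_eq_num.symm
    _ ≤ ‖(q : ℚ_[p])‖ * 1 := by gcongr; simpa using Padic.norm_int_le_one (p := p) q.den
    _ < 1 := by rwa [mul_one]

namespace ZMod

variable {p : ℕ}

theorem natCast_ne_zero_of_pos_of_lt {a : ℕ} (h0 : 0 < a) (hlt : a < p) : (a : ZMod p) ≠ 0 := by
  rw [Ne, natCast_eq_zero_iff]
  exact Nat.not_dvd_of_pos_of_lt h0 hlt

theorem inv_pow_natCast_sub {k : ℕ} (hk : k ≤ p) {m : ℕ} (hm : Even m) :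
    (((p - k : ℕ) : ZMod p) ^ m)⁻¹ = ((k : ZMod p) ^ m)⁻¹ := by
  rw [Nat.cast_sub hk, natCast_self, zero_sub, hm.neg_pow]

variable [Fact p.Prime]

theorem sum_Icc_inv_pow_eq_zero {t : ℕ} (ht : ¬ p - 1 ∣ t) :
    ∑ k ∈ Icc 1 (p - 1), ((k : ZMod p) ^ t)⁻¹ = 0 := by
  classical
  have hp := (Fact.out : p.Prime).one_lt
  calc ∑ k ∈ Icc 1 (p - 1), ((k : ZMod p) ^ t)⁻¹
      = ∑ u : (ZMod p)ˣ, ((u : ZMod p) ^ t)⁻¹ :=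
        sum_bij'
          (fun k hk ↦ Units.mk0 (k : ZMod p) (natCast_ne_zero_of_pos_of_lt (by grind) (by grind)))
          (fun u _ ↦ (u : ZMod p).val)
          (fun _ _ ↦ mem_univ _)
          (fun u _ ↦ by grind [u.ne_zero, val_ne_zero, val_lt])
          (fun k hk ↦ by simp [val_cast_of_lt (by grind : k < p)])
          (fun u _ ↦ Units.ext (natCast_zmod_val _)) (fun _ _ ↦ rfl)
    _ = ∑ u : (ZMod p)ˣ, ((u⁻¹ : (ZMod p)ˣ) : ZMod p) ^ t := by
        simp only [Units.val_inv_eq_inv_val, inv_pow]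
    _ = ∑ u : (ZMod p)ˣ, (u : ZMod p) ^ t := Fintype.sum_equiv (Equiv.inv _) _ _ fun _ ↦ rfl
    _ = 0 := by rw [FiniteField.sum_pow_units, card, if_neg ht]

theorem sumPartialSumSqMul_inv_pow_eq_zero {n : ℕ} (hdvd : ¬ p - 1 ∣ 6 * n) :
    sumPartialSumSqMul (fun j ↦ ((j : ZMod p) ^ (2 * n))⁻¹) (p - 1) = 0 := by
  have hp := (Fact.out : p.Prime).two_le
  have hp3 : 3 < p := by
    by_contra! h
    interval_cases p
    · exact hdvd (one_dvd _)
    · exact hdvd (Dvd.intro (3 * n) (by ring))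
  have h2 : (2 : ZMod p) ≠ 0 := mod_cast natCast_ne_zero_of_pos_of_lt (a := 2) two_pos (by omega)
  have h3 : (3 : ZMod p) ≠ 0 := mod_cast natCast_ne_zero_of_pos_of_lt (a := 3) three_pos hp3
  refine sumPartialSumSqMul_eq_zero h2 h3 (fun k hk ↦ ?_) ?_ ?_
  · rw [Nat.sub_add_cancel (by omega)]
    exact inv_pow_natCast_sub (by grind) (even_two_mul n)
  · exact sum_Icc_inv_pow_eq_zero fun h ↦ hdvd (h.trans ⟨3, by ring⟩)
  · simpa only [inv_pow, pow_mul] using sum_Icc_inv_pow_eq_zero (t := 2 * n * 3)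
      fun h ↦ hdvd (by rwa [show 6 * n = 2 * n * 3 by ring])

end ZMod

theorem stmt_2_general (p : ℕ) (hp : p.Prime) (n : ℕ)
    (hdvd : ¬ (p - 1) ∣ 6 * n) :
    (p : ℤ) ∣
      (∑ k ∈ Finset.Icc 1 (p - 1),
        (∑ j ∈ Finset.Icc 1 k, (1 : ℚ) / (j : ℚ) ^ (2 * n)) ^ 2
          / (k : ℚ) ^ (2 * n)).num := by
  have := Fact.mk hp
  set u : ℕ → ℤ_[p] := fun j ↦ (j : ℤ_[p]).inv ^ (2 * n)
  have hu (K : Type) [Field K] (φ : ℤ_[p] →+* K) :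
      ∀ j ∈ Icc 1 (p - 1), φ (u j) = ((j : K) ^ (2 * n))⁻¹ := by
    intro j hj
    have hj1 : ‖(j : ℤ_[p])‖ = 1 := PadicInt.norm_natCast_eq_one_iff.mpr
      (hp.coprime_iff_not_dvd.mpr (Nat.not_dvd_of_pos_of_lt (mem_Icc.mp hj).1 (by grind)))
    simp [u, PadicInt.map_inv_of_norm_eq_one φ hj1, inv_pow]
  have hmod : PadicInt.toZMod (sumPartialSumSqMul u (p - 1)) = 0 := by
    rw [map_sumPartialSumSqMul, sumPartialSumSqMul_congr (hu _ _)]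
    exact ZMod.sumPartialSumSqMul_inv_pow_eq_zero hdvd
  have hcoe : ((sumPartialSumSqMul u (p - 1) : ℤ_[p]) : ℚ_[p])
      = ((sumPartialSumSqMul (fun j ↦ ((j : ℚ) ^ (2 * n))⁻¹) (p - 1) : ℚ) : ℚ_[p]) := by
    change PadicInt.Coe.ringHom _ = Rat.castHom ℚ_[p] _
    rw [map_sumPartialSumSqMul, sumPartialSumSqMul_congr (hu _ _), map_sumPartialSumSqMul]
    simp
  simp only [div_eq_mul_inv, one_mul]
  change (p : ℤ) ∣ (sumPartialSumSqMul (fun j ↦ ((j : ℚ) ^ (2 * n))⁻¹) (p - 1)).num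
  apply Padic.dvd_num_of_norm_lt_one
  rw [← hcoe, PadicInt.padic_norm_e_of_padicInt]
  exact PadicInt.norm_lt_one_of_toZMod_eq_zero hmod

/-- For an odd prime `p` and a positive integer `n` with
`p - 1 ∤ 6n`, we have `∑_{k=1}^{p-1} H_{k,2n}²/k^{2n} ≡ 0 (mod p)`. -/
theorem stmt_2 (p : ℕ) (hp : p.Prime) (hodd : Odd p) (n : ℕ) (hn : 0 < n)
    (hdvd : ¬ (p - 1) ∣ 6 * n) :
    (p : ℤ) ∣
      (∑ k ∈ Finset.Icc 1 (p - 1),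
        (∑ j ∈ Finset.Icc 1 k, (1 : ℚ) / (j : ℚ) ^ (2 * n)) ^ 2
          / (k : ℚ) ^ (2 * n)).num :=
  stmt_2_general p hp n hdvd
end

section
/- Let p > 3 be a prime. Then ∑_{k=1}^{p-1} (−1)^k/k² ≡ (p/2)·B_{p-3} (mod p²). -/
/-!
Write `p = 2h + 1`, `T = ∑_{k ≤ h} (-1)^k/k³` and `B = B_{p-3}`. Pairing `k` with `p - k` and
using `1/k + 1/(p-k) = p/(k(p-k))` gives `∑_{k<p} (-1)^k/k² ≡ -2pT (mod p²)`, so it suffices to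
show `T ≡ -B/4 (mod p)`. The same pairing gives `∑_{k<p} (-1)^k/k³ ≡ 2T` and
`∑_{k<p} 1/k³ ≡ 0 (mod p)`; adding the two sums kills the odd `k`, whence
`T ≡ (1/8) ∑_{k≤h} 1/k³ ≡ (1/8) ∑_{k≤h} k^{p-4}` by Fermat. Faulhaber's formula for this power
sum, evaluated at `h + 1 ≡ 1/2`, together with the duplication formula
`B_n(1/2) = (2^{1-n} - 1) B_n`, gives `∑_{k≤h} k^{p-4} ≡ -2B (mod p)`.
-/

open Finset

/-- `x ≡ 0 (mod p ^ r)`: `p ^ r` divides `x` in `ℤ_[p]`. For `r = 0` it says `x` is `p`-integral. -/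
def PadicDvd (p : ℕ) [Fact p.Prime] (r : ℕ) (x : ℚ) : Prop :=
  ∃ z : ℤ_[p], (x : ℚ_[p]) = (p : ℚ_[p]) ^ r * z

namespace PadicDvd

variable {p : ℕ} [Fact p.Prime] {r s : ℕ} {x y c : ℚ}

theorem zero (r : ℕ) : PadicDvd p r 0 := ⟨0, by simp⟩

theorem add (hx : PadicDvd p r x) (hy : PadicDvd p r y) : PadicDvd p r (x + y) := by
  obtain ⟨z, hz⟩ := hx
  obtain ⟨w, hw⟩ := hy
  exact ⟨z + w, by push_cast [hz, hw]; ring⟩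

theorem neg (hx : PadicDvd p r x) : PadicDvd p r (-x) := by
  obtain ⟨z, hz⟩ := hx
  exact ⟨-z, by push_cast [hz]; ring⟩

theorem sub (hx : PadicDvd p r x) (hy : PadicDvd p r y) : PadicDvd p r (x - y) := by
  simpa only [sub_eq_add_neg] using hx.add hy.neg

theorem mul (hx : PadicDvd p r x) (hy : PadicDvd p s y) : PadicDvd p (r + s) (x * y) := by
  obtain ⟨z, hz⟩ := hx
  obtain ⟨w, hw⟩ := hy
  exact ⟨z * w, by push_cast [hz, hw]; ring⟩

theorem mul_left (hc : PadicDvd p 0 c) (hx : PadicDvd p r x) : PadicDvd p r (c * x) := by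
  simpa only [zero_add] using hc.mul hx

theorem mul_right (hx : PadicDvd p r x) (hc : PadicDvd p 0 c) : PadicDvd p r (x * c) :=
  mul_comm c x ▸ hc.mul_left hx

theorem sum {ι : Type*} {t : Finset ι} {f : ι → ℚ} (h : ∀ i ∈ t, PadicDvd p r (f i)) :
    PadicDvd p r (∑ i ∈ t, f i) := by
  classical
  induction t using Finset.induction with
  | empty => exact zero r
  | insert a t ha ih =>
    rw [sum_insert ha]
    exact (h a (mem_insert_self a t)).add (ih fun i hi ↦ h i (mem_insert_of_mem hi))

theorem of_norm_le_one (hx : ‖(x : ℚ_[p])‖ ≤ 1) : PadicDvd p 0 x := ⟨⟨x, hx⟩, by simp⟩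

theorem intCast_of_dvd {n : ℤ} (h : (p : ℤ) ^ r ∣ n) : PadicDvd p r n := by
  obtain ⟨m, rfl⟩ := h
  exact ⟨m, by push_cast; ring⟩

theorem natCast_of_dvd {n : ℕ} (h : p ^ r ∣ n) : PadicDvd p r n := by
  exact_mod_cast intCast_of_dvd (n := n) (by exact_mod_cast h)

theorem intCast (n : ℤ) : PadicDvd p 0 n := intCast_of_dvd (by simp)

theorem natCast (n : ℕ) : PadicDvd p 0 n := natCast_of_dvd (by simp)

theorem natCast_pow : PadicDvd p r ((p : ℚ) ^ r) := by
  exact_mod_cast natCast_of_dvd (p := p) (r := r) (n := p ^ r) dvd_rfl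

theorem natCast_self : PadicDvd p 1 p := by simpa using natCast_pow (p := p) (r := 1)

theorem pow (hx : PadicDvd p 0 x) (n : ℕ) : PadicDvd p 0 (x ^ n) := by
  induction n with
  | zero => simpa using natCast (p := p) 1
  | succ n ih => rw [pow_succ]; exact ih.mul_right hx

theorem neg_one_pow_mul (hx : PadicDvd p r x) (k : ℕ) : PadicDvd p r ((-1) ^ k * x) := by
  rcases neg_one_pow_eq_or ℚ k with h | h <;> simp [h, hx, hx.neg]

theorem inv_natCast {k : ℕ} (hk : ¬ p ∣ k) : PadicDvd p 0 (k : ℚ)⁻¹ := by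
  have hk1 : ‖(k : ℚ_[p])‖ = 1 :=
    Padic.norm_natCast_eq_one_iff.mpr ((Nat.Prime.coprime_iff_not_dvd Fact.out).mpr hk)
  exact of_norm_le_one (by simp [hk1])

theorem inv_natCast_of_lt {k : ℕ} (hk0 : 0 < k) (hkp : k < p) : PadicDvd p 0 (k : ℚ)⁻¹ :=
  inv_natCast (Nat.not_dvd_of_pos_of_lt hk0 hkp)

theorem div_natCast (hx : PadicDvd p r x) {k : ℕ} (hk : ¬ p ∣ k) : PadicDvd p r (x / k) :=
  hx.mul_right (inv_natCast hk)

theorem pow_sub_pow (hx : PadicDvd p 0 x) (hy : PadicDvd p 0 y) (h : PadicDvd p r (x - y))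
    (n : ℕ) : PadicDvd p r (x ^ n - y ^ n) := by
  rw [← geom_sum₂_mul]
  exact mul_left (sum fun i _ ↦ (hx.pow i).mul_left (hy.pow _)) h

theorem num_dvd (hx : PadicDvd p r x) : (p : ℤ) ^ r ∣ x.num := by
  obtain ⟨z, hz⟩ := hx
  refine (PadicInt.pow_p_dvd_int_iff r x.num).mp ⟨z * x.den, Subtype.ext ?_⟩
  push_cast
  rw [← mul_assoc, ← hz]
  exact_mod_cast (Rat.mul_den_eq_num x).symm

theorem bernoulli_of_lt {n : ℕ} (hn : n < p - 1) : PadicDvd p 0 (bernoulli n) := by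
  obtain ⟨k, rfl | rfl⟩ := n.even_or_odd'
  · obtain ⟨m, hm⟩ := Bernoulli.vonStaudt_clausen k
    rw [eq_sub_of_add_eq hm.symm]
    refine (intCast m).sub (sum fun q hq ↦ ?_)
    simp only [mem_filter, mem_range] at hq
    obtain ⟨hq2k, hq, hqk⟩ := hq
    have hqp : ¬ p ∣ q := by
      rw [Nat.prime_dvd_prime_iff_eq Fact.out hq]
      rintro rfl
      rcases Nat.eq_zero_or_pos k with rfl | hk
      · exact hq.one_lt.not_ge (by omega)
      · exact (Nat.le_of_dvd (by omega) hqk).not_gt (by omega)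
    simpa using inv_natCast hqp
  · rcases Nat.eq_zero_or_pos k with rfl | hk
    · have hp2 : ¬ p ∣ 2 := fun h ↦ (Nat.le_of_dvd two_pos h).not_gt (by omega)
      simpa [bernoulli_one, div_eq_mul_inv] using
        (intCast (p := p) (-1)).mul_right (inv_natCast hp2)
    · rw [bernoulli_eq_zero_of_odd (odd_two_mul_add_one k) (by omega)]
      exact natCast 0

end PadicDvd

section
open PowerSeries Nat

theorem rescale_two_bernoulliPowerSeries_mul_exp_add_one :
    rescale (2 : ℚ) (bernoulliPowerSeries ℚ) * (exp ℚ + 1)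
      = C (2 : ℚ) * bernoulliPowerSeries ℚ := by
  have hexp : exp ℚ - 1 ≠ 0 := fun h ↦ by simpa using congrArg (coeff 1) h
  refine mul_right_cancel₀ hexp ?_
  calc rescale (2 : ℚ) (bernoulliPowerSeries ℚ) * (exp ℚ + 1) * (exp ℚ - 1)
      = rescale (2 : ℚ) (bernoulliPowerSeries ℚ * (exp ℚ - 1)) := by
        rw [map_mul, map_sub, map_one, ← Nat.cast_ofNat, ← exp_pow_eq_rescale_exp]; ring
    _ = C (2 : ℚ) * bernoulliPowerSeries ℚ * (exp ℚ - 1) := by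
        rw [bernoulliPowerSeries_mul_exp_sub_one, mul_assoc, bernoulliPowerSeries_mul_exp_sub_one]
        ext n
        rcases eq_or_ne n 1 with rfl | hn <;> simp [coeff_X, *]

theorem sum_choose_mul_bernoulli_mul_two_pow (n : ℕ) :
    ∑ i ∈ range (n + 1), (n.choose i : ℚ) * bernoulli i * 2 ^ i
      = (2 - 2 ^ n) * bernoulli n := by
  have hco := congrArg (coeff n) rescale_two_bernoulliPowerSeries_mul_exp_add_one
  rw [mul_add, mul_one, map_add, coeff_mul, Nat.sum_antidiagonal_eq_sum_range_succ_mk] at hco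
  simp only [coeff_rescale, bernoulliPowerSeries, coeff_mk, coeff_exp, coeff_C_mul,
    Algebra.algebraMap_self, RingHom.id_apply] at hco
  have key : ∀ i ∈ range (n + 1), (n.choose i : ℚ) * bernoulli i * 2 ^ i
      = 2 ^ i * (bernoulli i / i !) * (1 / ((n - i) ! : ℚ)) * n ! := by
    intro i hi
    have hf : ((n.choose i : ℕ) : ℚ) * i ! * (n - i)! = n ! := by
      exact_mod_cast Nat.choose_mul_factorial_mul_factorial (Nat.lt_succ_iff.mp (mem_range.mp hi))
    field_simp
    linear_combination bernoulli i * hf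
  rw [sum_congr rfl key, ← sum_mul, eq_sub_of_add_eq hco]
  field_simp

end

/-- The left side is `B_{n+1}(1/2) - B_{n+1}`, for the Bernoulli polynomial `B_{n+1}`. -/
theorem sum_bernoulli_mul_choose_mul_half_pow (n : ℕ) :
    ∑ i ∈ range (n + 1), bernoulli i * ((n + 1).choose i : ℚ) * (2⁻¹) ^ (n + 1 - i)
      = ((2⁻¹) ^ n - 2) * bernoulli (n + 1) := by
  have h := sum_choose_mul_bernoulli_mul_two_pow (n + 1)
  rw [sum_range_succ, Nat.choose_self, Nat.cast_one, one_mul] at h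
  have key : ∀ i ∈ range (n + 1),
      bernoulli i * ((n + 1).choose i : ℚ) * (2⁻¹) ^ (n + 1 - i)
        = (2⁻¹) ^ (n + 1) * (((n + 1).choose i : ℚ) * bernoulli i * 2 ^ i) := by
    intro i hi
    rw [← Nat.sub_add_cancel (mem_range.mp hi).le]
    simp only [Nat.add_sub_cancel, pow_add, inv_pow]
    field_simp
  rw [sum_congr rfl key, ← mul_sum, eq_sub_of_add_eq h, inv_pow, inv_pow]
  field_simp
  ring

theorem sum_Icc_two_mul_eq_sum_add_reflect {M : Type*} [AddCommMonoid M] (f : ℕ → M) (h : ℕ) :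
    ∑ k ∈ Icc 1 (2 * h), f k = ∑ k ∈ Icc 1 h, (f k + f (2 * h + 1 - k)) := by
  have hsplit : Icc 1 (2 * h) = Icc 1 h ∪ Ioc h (2 * h) := by
    ext k; simp only [mem_Icc, mem_Ioc, mem_union]; omega
  have hdisj : Disjoint (Icc 1 h) (Ioc h (2 * h)) :=
    disjoint_left.mpr fun k hk hk' ↦ by simp only [mem_Icc, mem_Ioc] at hk hk'; omega
  rw [hsplit, sum_union hdisj, sum_add_distrib]
  congr 1
  refine sum_nbij' (fun k ↦ 2 * h + 1 - k) (fun k ↦ 2 * h + 1 - k) ?_ ?_ ?_ ?_ ?_ <;>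
    intro k hk <;> simp only [mem_Icc, mem_Ioc] at hk ⊢
  all_goals first | omega | (congr 1; omega)

theorem sum_Icc_two_mul_eq_sum_odd_add_even {M : Type*} [AddCommMonoid M] (f : ℕ → M)
    (h : ℕ) :
    ∑ k ∈ Icc 1 (2 * h), f k = ∑ k ∈ Icc 1 h, (f (2 * k - 1) + f (2 * k)) := by
  induction h with
  | zero => simp
  | succ h ih =>
    rw [show 2 * (h + 1) = 2 * h + 1 + 1 by ring, sum_Icc_succ_top (by omega),
      sum_Icc_succ_top (by omega), ih, sum_Icc_succ_top (by omega), add_assoc]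
    rfl

theorem neg_one_pow_sub {R : Type*} [CommRing R] {m n : ℕ} (h : m ≤ n) :
    (-1 : R) ^ (n - m) = (-1) ^ n * (-1) ^ m := by
  obtain ⟨k, rfl⟩ := Nat.exists_eq_add_of_le h
  rw [Nat.add_sub_cancel_left, pow_add, mul_right_comm, ← mul_pow, neg_mul_neg, one_mul, one_pow,
    one_mul]

theorem inv_add_inv_natCast_sub_eq {n k : ℕ} (hk0 : 0 < k) (hkn : k < n) :
    (k : ℚ)⁻¹ + ((n - k : ℕ) : ℚ)⁻¹
      = n * (k : ℚ)⁻¹ * ((n - k : ℕ) : ℚ)⁻¹ := by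
  have hnk : ((n - k : ℕ) : ℚ) ≠ 0 := by simp; omega
  field_simp
  rw [Nat.cast_sub hkn.le]
  ring

theorem sum_neg_one_pow_div_pow_add_inv_pow (h s : ℕ) :
    ∑ k ∈ Icc 1 (2 * h), ((-1) ^ k / (k : ℚ) ^ s + ((k : ℚ) ^ s)⁻¹)
      = 2 / 2 ^ s * ∑ k ∈ Icc 1 h, ((k : ℚ) ^ s)⁻¹ := by
  rw [sum_Icc_two_mul_eq_sum_odd_add_even, mul_sum]
  refine sum_congr rfl fun k hk ↦ ?_
  have hk1 : 1 ≤ k := (mem_Icc.mp hk).1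
  rw [Odd.neg_one_pow ⟨k - 1, by omega⟩, Even.neg_one_pow ⟨k, by omega⟩]
  push_cast [Nat.cast_sub (by omega : 1 ≤ 2 * k)]
  field_simp
  ring

namespace PadicDvd

variable {p : ℕ} [Fact p.Prime]

theorem inv_add_inv_natCast_sub {k : ℕ} (hk0 : 0 < k) (hkp : k < p) :
    PadicDvd p 1 ((k : ℚ)⁻¹ + ((p - k : ℕ) : ℚ)⁻¹) := by
  rw [inv_add_inv_natCast_sub_eq hk0 hkp]
  exact (natCast_self.mul_right (inv_natCast_of_lt hk0 hkp)).mul_right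
    (inv_natCast_of_lt (by omega) (by omega))

theorem inv_pow_add_inv_pow_natCast_sub {k s : ℕ} (hs : Odd s) (hk0 : 0 < k) (hkp : k < p) :
    PadicDvd p 1 (((k : ℚ) ^ s)⁻¹ + (((p - k : ℕ) : ℚ) ^ s)⁻¹) := by
  have hb : PadicDvd p 0 ((p - k : ℕ) : ℚ)⁻¹ := inv_natCast_of_lt (by omega) (by omega)
  have h := pow_sub_pow (inv_natCast_of_lt hk0 hkp) hb.neg
    (by simpa using inv_add_inv_natCast_sub hk0 hkp) s
  simpa [hs.neg_pow, inv_pow] using h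

theorem inv_sq_sub_inv_sq_natCast_sub_add {k : ℕ} (hk0 : 0 < k) (hkp : k < p) :
    PadicDvd p 2
      (((k : ℚ) ^ 2)⁻¹ - (((p - k : ℕ) : ℚ) ^ 2)⁻¹ + 2 * p * ((k : ℚ) ^ 3)⁻¹) := by
  set a : ℚ := (k : ℚ)⁻¹
  set b : ℚ := ((p - k : ℕ) : ℚ)⁻¹
  have ha : PadicDvd p 0 a := inv_natCast_of_lt hk0 hkp
  have hb : PadicDvd p 0 b := inv_natCast_of_lt (by omega) (by omega)
  have hab : a + b = p * a * b := inv_add_inv_natCast_sub_eq hk0 hkp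
  have key : a ^ 2 - b ^ 2 + 2 * p * a ^ 3 = p ^ 2 * (a ^ 2 * b * (2 * a - b)) := by
    linear_combination (a - b + p * a * (2 * a - b)) * hab
  rw [← inv_pow, ← inv_pow, ← inv_pow, key]
  exact natCast_pow.mul_right
    (((ha.pow 2).mul_right hb).mul_right (((natCast 2).mul_right ha).sub hb))

theorem inv_pow_sub_pow {k s : ℕ} (hk0 : 0 < k) (hkp : k < p) (hs : s ≤ p - 1) :
    PadicDvd p 1 (((k : ℚ) ^ s)⁻¹ - (k : ℚ) ^ (p - 1 - s)) := by
  have hcop : IsCoprime (k : ℤ) p := Nat.isCoprime_iff_coprime.mpr (Nat.coprime_comm.mp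
    ((Nat.Prime.coprime_iff_not_dvd Fact.out).mpr (Nat.not_dvd_of_pos_of_lt hk0 hkp)))
  have hfermat : (p : ℤ) ^ 1 ∣ 1 - (k : ℤ) ^ (p - 1) := by
    simpa using (Int.ModEq.pow_card_sub_one_eq_one Fact.out hcop).dvd
  have hpow : (k : ℚ) ^ (p - 1) = (k : ℚ) ^ s * (k : ℚ) ^ (p - 1 - s) := by
    rw [← pow_add, Nat.add_sub_cancel' hs]
  have key : ((k : ℚ) ^ s)⁻¹ - (k : ℚ) ^ (p - 1 - s)
      = (k : ℚ)⁻¹ ^ s * ((1 - (k : ℤ) ^ (p - 1) : ℤ) : ℚ) := by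
    push_cast
    rw [hpow, inv_pow, mul_sub, mul_one, ← mul_assoc, inv_mul_cancel₀ (by positivity), one_mul]
  rw [key]
  exact ((inv_natCast_of_lt hk0 hkp).pow s).mul_left (intCast_of_dvd hfermat)

/-- Faulhaber's formula, evaluated at `h + 1 ≡ 1/2 (mod p)`. -/
theorem sum_range_pow_sub {h n : ℕ} (hph : p = 2 * h + 1) (hn : n < p - 1) :
    PadicDvd p 1 (∑ k ∈ range (h + 1), (k : ℚ) ^ n
      - ((2⁻¹) ^ n - 2) * bernoulli (n + 1) / (n + 1)) := by
  have h2 : ¬ p ∣ 2 := fun hd ↦ by have := Nat.le_of_dvd two_pos hd; omega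
  have hn1 : ¬ p ∣ n + 1 := Nat.not_dvd_of_pos_of_lt n.succ_pos (by omega)
  have hhalf : PadicDvd p 1 ((h + 1 : ℕ) - 2⁻¹ : ℚ) := by
    convert natCast_self.div_natCast h2 using 1
    rw [hph]; push_cast; ring
  rw [sum_range_pow, ← sum_bernoulli_mul_choose_mul_half_pow, sum_div, ← sum_sub_distrib]
  refine sum fun i hi ↦ ?_
  have hi : i < p - 1 := by have := mem_range.mp hi; omega
  rw [← sub_div, ← mul_sub]
  exact_mod_cast (mul_left ((bernoulli_of_lt hi).mul_right (natCast _))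
    (pow_sub_pow (natCast _) (by simpa using inv_natCast h2) hhalf _)).div_natCast hn1

theorem sum_Icc_pow_add_two_mul_bernoulli (hp3 : 3 < p) :
    PadicDvd p 1 (∑ k ∈ Icc 1 (p / 2), (k : ℚ) ^ (p - 4) + 2 * bernoulli (p - 3)) := by
  obtain ⟨h, hph⟩ := (Fact.out : p.Prime).odd_of_ne_two (by omega)
  have hF := sum_range_pow_sub hph (n := p - 4) (by omega)
  rw [range_eq_Ico, sum_eq_sum_Ico_succ_bot h.succ_pos, Nat.cast_zero, zero_pow (by omega),
    zero_add, zero_add, Nat.succ_eq_add_one, Ico_add_one_right_eq_Icc,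
    show p - 4 + 1 = p - 3 by omega] at hF
  have hfermat := inv_pow_sub_pow (p := p) (k := 2) two_pos (by omega) le_rfl
  rw [Nat.sub_self, pow_zero] at hfermat
  have hpd : ¬ p ∣ p - 3 := Nat.not_dvd_of_pos_of_lt (by omega) (by omega)
  have hB : PadicDvd p 1 (((2⁻¹) ^ (p - 4) - 2) * bernoulli (p - 3) / (((p - 4 : ℕ) : ℚ) + 1)
      + 2 * bernoulli (p - 3)) := by
    -- `2^(4-p) - 2 + 2(p - 3) = 8 (2^(1-p) - 1) + 2p`
    convert (((natCast 8).mul_left hfermat).add ((natCast 2).mul_left natCast_self)).div_natCast hpd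
      |>.mul_right (bernoulli_of_lt (p := p) (n := p - 3) (by omega)) using 1
    have hd : ((p - 4 : ℕ) : ℚ) + 1 = ((p - 3 : ℕ) : ℚ) := by norm_cast; omega
    have hd0 : ((p - 3 : ℕ) : ℚ) ≠ 0 := Nat.cast_ne_zero.mpr (by omega)
    have hp : (p : ℚ) = ((p - 3 : ℕ) : ℚ) + 3 := by norm_cast; omega
    rw [hd, show p - 1 = p - 4 + 3 by omega, inv_pow, hp]
    push_cast
    field_simp
    ring
  rw [show p / 2 = h by omega]
  convert hF.add hB using 1
  ring

theorem sum_neg_one_pow_div_sq_add (hp2 : p ≠ 2) :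
    PadicDvd p 2 (∑ k ∈ Icc 1 (p - 1), (-1) ^ k / (k : ℚ) ^ 2
      + 2 * p * ∑ k ∈ Icc 1 (p / 2), (-1) ^ k / (k : ℚ) ^ 3) := by
  obtain ⟨h, hph⟩ := (Fact.out : p.Prime).odd_of_ne_two hp2
  rw [show p - 1 = 2 * h by omega, show p / 2 = h by omega, sum_Icc_two_mul_eq_sum_add_reflect,
    mul_sum, ← sum_add_distrib]
  refine sum fun k hk ↦ ?_
  obtain ⟨hk0, hkh⟩ := mem_Icc.mp hk
  rw [show 2 * h + 1 - k = p - k by omega, neg_one_pow_sub (by omega), Odd.neg_one_pow ⟨h, hph⟩]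
  convert (inv_sq_sub_inv_sq_natCast_sub_add (p := p) (k := k) (by omega)
    (by omega)).neg_one_pow_mul k using 1
  ring

theorem sum_neg_one_pow_div_pow_sub {s : ℕ} (hs : Odd s) (hp2 : p ≠ 2) :
    PadicDvd p 1 (∑ k ∈ Icc 1 (p - 1), (-1) ^ k / (k : ℚ) ^ s
      - 2 * ∑ k ∈ Icc 1 (p / 2), (-1) ^ k / (k : ℚ) ^ s) := by
  obtain ⟨h, hph⟩ := (Fact.out : p.Prime).odd_of_ne_two hp2
  rw [show p - 1 = 2 * h by omega, show p / 2 = h by omega, sum_Icc_two_mul_eq_sum_add_reflect,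
    mul_sum, ← sum_sub_distrib]
  refine sum fun k hk ↦ ?_
  obtain ⟨hk0, hkh⟩ := mem_Icc.mp hk
  rw [show 2 * h + 1 - k = p - k by omega, neg_one_pow_sub (by omega), Odd.neg_one_pow ⟨h, hph⟩]
  convert (inv_pow_add_inv_pow_natCast_sub (p := p) hs (k := k) (by omega)
    (by omega)).neg.neg_one_pow_mul k using 1
  ring

theorem sum_inv_pow {s : ℕ} (hs : Odd s) (hp2 : p ≠ 2) :
    PadicDvd p 1 (∑ k ∈ Icc 1 (p - 1), ((k : ℚ) ^ s)⁻¹) := by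
  obtain ⟨h, hph⟩ := (Fact.out : p.Prime).odd_of_ne_two hp2
  rw [show p - 1 = 2 * h by omega, sum_Icc_two_mul_eq_sum_add_reflect]
  refine sum fun k hk ↦ ?_
  obtain ⟨hk0, hkh⟩ := mem_Icc.mp hk
  rw [show 2 * h + 1 - k = p - k by omega]
  exact inv_pow_add_inv_pow_natCast_sub hs (by omega) (by omega)

theorem sum_inv_pow_sub_sum_pow {m s : ℕ} (hm : m < p) (hs : s ≤ p - 1) :
    PadicDvd p 1
      (∑ k ∈ Icc 1 m, ((k : ℚ) ^ s)⁻¹ - ∑ k ∈ Icc 1 m, (k : ℚ) ^ (p - 1 - s)) := by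
  rw [← sum_sub_distrib]
  exact sum fun k hk ↦ inv_pow_sub_pow (mem_Icc.mp hk).1 ((mem_Icc.mp hk).2.trans_lt hm) hs

theorem sum_neg_one_pow_div_cube_add_bernoulli (hp3 : 3 < p) :
    PadicDvd p 1 (∑ k ∈ Icc 1 (p / 2), (-1) ^ k / (k : ℚ) ^ 3 + bernoulli (p - 3) / 4) := by
  have hp2 : p ≠ 2 := by omega
  obtain ⟨h, hph⟩ := (Fact.out : p.Prime).odd_of_ne_two hp2
  have hU := sum_neg_one_pow_div_pow_sub (s := 3) (by decide) hp2
  have hC := sum_inv_pow (s := 3) (by decide) hp2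
  have hA := sum_inv_pow_sub_sum_pow (p := p) (m := p / 2) (s := 3) (by omega) (by omega)
  have hB := sum_Icc_pow_add_two_mul_bernoulli hp3
  have hUC := sum_neg_one_pow_div_pow_add_inv_pow h 3
  rw [sum_add_distrib] at hUC
  rw [show p - 1 = 2 * h by omega] at hU hC
  rw [show p - 1 - 3 = p - 4 by omega] at hA
  rw [show p / 2 = h by omega] at hU hA hB ⊢
  have h8 : ¬ p ∣ 8 := fun hd ↦ by
    have := Nat.le_of_dvd two_pos ((Fact.out : p.Prime).dvd_of_dvd_pow (n := 3) hd)
    omega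
  convert (((((intCast (-4)).mul_left hU).add ((intCast (-4)).mul_left hC)).add hA).add
    hB).div_natCast h8 using 1
  push_cast
  linear_combination (1 / 2 : ℚ) * hUC

end PadicDvd

/-- For a prime `p > 3`,
`∑_{k=1}^{p-1} (-1)^k/k² ≡ (p/2)·B_{p-3} (mod p²)`. -/
theorem stmt_4 (p : ℕ) (hp : p.Prime) (hp3 : 3 < p) :
    (p : ℤ) ^ 2 ∣
      ((∑ k ∈ Finset.Icc 1 (p - 1), (-1 : ℚ) ^ k / (k : ℚ) ^ 2)
        - (p : ℚ) / 2 * bernoulli (p - 3)).num := by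
  have := Fact.mk hp
  have hS := PadicDvd.sum_neg_one_pow_div_sq_add (p := p) (by omega)
  have hT := PadicDvd.sum_neg_one_pow_div_cube_add_bernoulli hp3
  refine PadicDvd.num_dvd ?_
  convert hS.sub ((PadicDvd.natCast 2).mul_left (PadicDvd.natCast_self.mul hT)) using 1
  push_cast
  ring
end

section
/- Let p > 3 be a prime. Then ∑_{k=1}^{p-1} (−1)^k/k³ ≡ −B_{p-3}/2 (mod p). -/
/-!
Modulo `p`, `1 / k³ ≡ k^(p-4)`, so the sum is `∑_{k<p} (-1)^k k^(p-4)`. Adding the power sum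
`∑_{k<p} k^(p-4) ≡ 0` doubles the even terms and leaves `2^(p-3) ∑_{j ≤ (p-1)/2} j^(p-4)`.
Faulhaber's formula expresses this half-range power sum through the Bernoulli polynomial
`B_{p-3}` at `(p+1)/2 ≡ 1/2`, and `B_N(1/2) = (2^(1-N) - 1) B_N` turns the result into a multiple
of `B_{p-3}`. By von Staudt–Clausen every Bernoulli number involved is `p`-integral, so the whole
computation can be reduced to `ZMod p`.
-/

open Finset PowerSeries

theorem Polynomial.bernoulli_eval_one_half (N : ℕ) :
    (bernoulli N).eval (1 / 2 : ℚ) = (2 * (1 / 2) ^ N - 1) * _root_.bernoulli N := by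
  set F := bernoulliPowerSeries ℚ
  set R := rescale (1 / 2 : ℚ) (exp ℚ)
  have hF : F * (exp ℚ - 1) = PowerSeries.X := bernoulliPowerSeries_mul_exp_sub_one ℚ
  have hR : R * R = exp ℚ := by rw [exp_mul_exp_eq_exp_add]; norm_num
  have hFR : rescale (1 / 2 : ℚ) F * (R - 1) = PowerSeries.C (1 / 2 : ℚ) * PowerSeries.X := by
    rw [← rescale_X, ← hF, map_mul, map_sub, map_one]
  have h2 : (2 : ℚ⟦X⟧) * PowerSeries.C (1 / 2 : ℚ) = 1 := by
    rw [← map_ofNat PowerSeries.C, ← map_mul]; norm_num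
  have key : (mk fun n => aeval (1 / 2 : ℚ) ((1 / n.factorial : ℚ) • bernoulli n))
      = 2 * rescale (1 / 2 : ℚ) F - F := by
    have hE : exp ℚ - 1 ≠ 0 := fun h => by simpa using congrArg (PowerSeries.coeff 1) h
    refine mul_right_cancel₀ hE ?_
    rw [bernoulli_generating_function]
    -- `exp - 1 = (R - 1) * (R + 1)` gives `(2 * F(X/2) - F) * (exp - 1) = X * (R + 1) - X`
    linear_combination (2 * rescale (1 / 2 : ℚ) F) * hR - 2 * (R + 1) * hFR + hF
      - PowerSeries.X * (R + 1) * h2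
  have hN := congrArg (PowerSeries.coeff N) key
  rw [two_mul] at hN
  simp only [coeff_mk, map_smul, Polynomial.coe_aeval_eq_eval, smul_eq_mul, map_sub, map_add,
    PowerSeries.coeff_rescale, PowerSeries.coeff_mk, F, bernoulliPowerSeries,
    Algebra.algebraMap_self, RingHom.id_apply] at hN
  field_simp at hN
  linear_combination hN

theorem sum_range_bernoulli_mul_choose_mul_two_pow (N : ℕ) :
    ∑ i ∈ range N, bernoulli i * N.choose i * (2 : ℚ) ^ i
      = (2 - 2 ^ (N + 1)) * bernoulli N := by
  have h := Polynomial.bernoulli_eval_one_half N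
  rw [Polynomial.bernoulli, Polynomial.eval_finsetSum] at h
  simp only [Polynomial.eval_monomial] at h
  have hterm : ∀ i ∈ range (N + 1),
      bernoulli i * N.choose i * (1 / 2 : ℚ) ^ (N - i) * 2 ^ N
        = bernoulli i * N.choose i * 2 ^ i := by
    intro i hi
    rw [← Nat.sub_add_cancel (mem_range_succ_iff.1 hi), pow_add]
    simp [field]
  have h2 : ∑ i ∈ range (N + 1), bernoulli i * N.choose i * (2 : ℚ) ^ i
      = (2 - 2 ^ N) * bernoulli N := by
    have h12 : (1 / 2 : ℚ) ^ N * 2 ^ N = 1 := by rw [← mul_pow]; norm_num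
    rw [← sum_congr rfl hterm, ← sum_mul, h]
    linear_combination 2 * bernoulli N * h12
  rw [sum_range_succ, Nat.choose_self] at h2
  linear_combination h2

namespace Rat

variable {p : ℕ} [Fact p.Prime]

theorem padicValuation_natCast_eq_one {k : ℕ} (hk : ¬ p ∣ k) :
    padicValuation p k = 1 := by
  rw [← Int.cast_natCast, padicValuation_cast, Int.padicValuation_eq_one_iff]
  exact_mod_cast hk

theorem inv_natCast_mem_padicValuation_integer {k : ℕ} (hk : ¬ p ∣ k) :
    (k : ℚ)⁻¹ ∈ (padicValuation p).integer := by
  rw [Valuation.mem_integer_iff, map_inv₀, padicValuation_natCast_eq_one hk, inv_one]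

theorem div_natCast_mem_padicValuation_integer {x : ℚ} (hx : x ∈ (padicValuation p).integer)
    {k : ℕ} (hk : ¬ p ∣ k) : x / k ∈ (padicValuation p).integer :=
  mul_mem hx (inv_natCast_mem_padicValuation_integer hk)

theorem natCast_den_ne_zero_of_mem {x : ℚ} (hx : x ∈ (padicValuation p).integer) :
    (x.den : ZMod p) ≠ 0 := by
  rw [Ne, ZMod.natCast_eq_zero_iff]
  exact padicValuation_le_one_iff.1 hx

theorem cast_add_of_mem {x y : ℚ} (hx : x ∈ (padicValuation p).integer)
    (hy : y ∈ (padicValuation p).integer) : ((x + y : ℚ) : ZMod p) = x + y :=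
  cast_add_of_ne_zero (natCast_den_ne_zero_of_mem hx) (natCast_den_ne_zero_of_mem hy)

theorem cast_sub_of_mem {x y : ℚ} (hx : x ∈ (padicValuation p).integer)
    (hy : y ∈ (padicValuation p).integer) : ((x - y : ℚ) : ZMod p) = x - y :=
  cast_sub_of_ne_zero (natCast_den_ne_zero_of_mem hx) (natCast_den_ne_zero_of_mem hy)

theorem cast_mul_of_mem {x y : ℚ} (hx : x ∈ (padicValuation p).integer)
    (hy : y ∈ (padicValuation p).integer) : ((x * y : ℚ) : ZMod p) = x * y :=
  cast_mul_of_ne_zero (natCast_den_ne_zero_of_mem hx) (natCast_den_ne_zero_of_mem hy)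

theorem cast_div_natCast_of_mem {x : ℚ} (hx : x ∈ (padicValuation p).integer) {k : ℕ}
    (hk : ¬ p ∣ k) : ((x / k : ℚ) : ZMod p) = x / k := by
  rw [cast_div_of_ne_zero (natCast_den_ne_zero_of_mem hx) (by simpa [ZMod.natCast_eq_zero_iff]),
    cast_natCast]

theorem cast_sum_of_mem {ι : Type*} {s : Finset ι} {f : ι → ℚ}
    (hf : ∀ i ∈ s, f i ∈ (padicValuation p).integer) :
    ((∑ i ∈ s, f i : ℚ) : ZMod p) = ∑ i ∈ s, (f i : ZMod p) := by
  induction s using Finset.cons_induction with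
  | empty => simp
  | cons i s hi ih =>
    have hs : ∀ j ∈ s, f j ∈ (padicValuation p).integer :=
      fun j hj => hf j (mem_cons_of_mem hj)
    rw [sum_cons, sum_cons, cast_add_of_mem (hf i (mem_cons_self i s)) (sum_mem hs), ih hs]

theorem dvd_num_of_cast_eq_zero {x : ℚ} (hx : x ∈ (padicValuation p).integer)
    (h : (x : ZMod p) = 0) : (p : ℤ) ∣ x.num := by
  rw [cast_def, div_eq_zero_iff, or_iff_left (natCast_den_ne_zero_of_mem hx),
    ZMod.intCast_zmod_eq_zero_iff_dvd] at h
  exact h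

end Rat

open Rat in
theorem bernoulli_mem_padicValuation_integer {p i : ℕ} [Fact p.Prime] (hi : i < p - 1) :
    bernoulli i ∈ (padicValuation p).integer := by
  have hp := (Fact.out : p.Prime).two_le
  obtain ⟨k, rfl | rfl⟩ := i.even_or_odd'
  · rcases k.eq_zero_or_pos with rfl | hk
    · simp
    obtain ⟨z, hz⟩ := Bernoulli.vonStaudt_clausen k
    rw [eq_sub_of_add_eq hz.symm]
    refine sub_mem (intCast_mem _ z) (sum_mem fun q hq => ?_)
    obtain ⟨-, hq, hqk⟩ := mem_filter.1 hq
    have hqp : q ≠ p := by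
      rintro rfl
      exact absurd (Nat.le_of_dvd (by omega) hqk) (by omega)
    rw [one_div]
    exact inv_natCast_mem_padicValuation_integer
      ((Nat.prime_dvd_prime_iff_eq Fact.out hq).not.2 hqp.symm)
  · rcases k.eq_zero_or_pos with rfl | hk
    · have h2 : ¬ p ∣ 2 := fun h => by have := Nat.le_of_dvd two_pos h; omega
      rw [bernoulli_one, neg_div, one_div]
      exact neg_mem (by exact_mod_cast inv_natCast_mem_padicValuation_integer h2)
    · rw [bernoulli_eq_zero_of_odd (odd_two_mul_add_one k) (by omega)]
      exact zero_mem _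

theorem Nat.not_dvd_of_mem_Icc_one_sub_one {p k : ℕ} (hk : k ∈ Icc 1 (p - 1)) : ¬ p ∣ k := by
  obtain ⟨hk1, hkp⟩ := mem_Icc.1 hk
  exact Nat.not_dvd_of_pos_of_lt hk1 (by omega)

theorem ZMod.sum_range_pow_eq_zero {p e : ℕ} [Fact p.Prime] (he : e < p - 1) :
    ∑ k ∈ range p, (k : ZMod p) ^ e = 0 := by
  refine (sum_nbij' (t := univ) (fun k : ℕ => (k : ZMod p)) ZMod.val (by simp)
    (fun x _ => mem_range.2 x.val_lt) (fun k hk => ZMod.val_cast_of_lt (mem_range.1 hk))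
    (fun x _ => ZMod.natCast_zmod_val x) (fun _ _ => rfl)).trans ?_
  exact FiniteField.sum_pow_lt_card_sub_one (ZMod p) e (by rwa [ZMod.card])

theorem sum_range_neg_one_pow_mul_pow_add_sum_range_pow {R : Type*} [CommRing R] (n e : ℕ) :
    ∑ k ∈ range (2 * n + 1), (-1) ^ k * (k : R) ^ e + ∑ k ∈ range (2 * n + 1), (k : R) ^ e
      = 2 ^ (e + 1) * ∑ j ∈ range (n + 1), (j : R) ^ e := by
  induction n with
  | zero =>
    simp only [zero_add, mul_zero, sum_range_one, pow_zero, one_mul, Nat.cast_zero]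
    rw [pow_succ, mul_right_comm, ← mul_pow, mul_zero]
    ring
  | succ n ih =>
    have hodd : (-1 : R) ^ (2 * n + 1) = -1 := by simp [pow_succ, pow_mul]
    have heven : ((2 * (n + 1) : ℕ) : R) ^ e = 2 ^ e * ((n + 1 : ℕ) : R) ^ e := by
      push_cast; rw [mul_pow]
    rw [show 2 * (n + 1) + 1 = 2 * n + 1 + 1 + 1 by ring]
    simp only [sum_range_succ _ (2 * n + 1 + 1), sum_range_succ _ (2 * n + 1),
      sum_range_succ _ (n + 1)]
    rw [pow_succ (-1 : R) (2 * n + 1), hodd, show 2 * n + 1 + 1 = 2 * (n + 1) by ring, heven]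
    linear_combination ih

section ReductionModP

variable {p : ℕ} [Fact p.Prime]

open Rat

theorem cast_sum_bernoulli_mul_natCast {N : ℕ} (hN : N ≤ p - 1) (c : ℕ → ℕ) :
    ((∑ i ∈ range N, bernoulli i * c i : ℚ) : ZMod p)
      = ∑ i ∈ range N, (bernoulli i : ZMod p) * c i := by
  have hB : ∀ i ∈ range N, bernoulli i ∈ (padicValuation p).integer :=
    fun i hi => bernoulli_mem_padicValuation_integer (by have := mem_range.1 hi; omega)
  rw [cast_sum_of_mem fun i hi => mul_mem (hB i hi) (natCast_mem _ _)]
  exact sum_congr rfl fun i hi => by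
    rw [cast_mul_of_mem (hB i hi) (natCast_mem _ _), Rat.cast_natCast]

theorem ZMod.mul_sum_range_pow {m : ℕ} (hm : m < p - 1) (n : ℕ) :
    ((m : ZMod p) + 1) * ∑ k ∈ range n, (k : ZMod p) ^ m
      = ∑ i ∈ range (m + 1),
          (bernoulli i : ZMod p) * (m + 1).choose i * (n : ZMod p) ^ (m + 1 - i) := by
  have h : ((((m + 1) * ∑ k ∈ range n, k ^ m : ℕ)) : ℚ)
      = ∑ i ∈ range (m + 1), bernoulli i * ((m + 1).choose i * n ^ (m + 1 - i) : ℕ) := by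
    push_cast
    rw [sum_range_pow, mul_sum]
    refine sum_congr rfl fun i _ => ?_
    field_simp
  have h' := congrArg (Rat.cast : ℚ → ZMod p) h
  rw [Rat.cast_natCast, cast_sum_bernoulli_mul_natCast (by omega)] at h'
  push_cast at h' ⊢
  simpa only [mul_assoc] using h'

theorem ZMod.sum_range_bernoulli_mul_choose_mul_two_pow {N : ℕ} (hN : N < p - 1) :
    ∑ i ∈ range N, (bernoulli i : ZMod p) * N.choose i * 2 ^ i
      = (2 - 2 ^ (N + 1)) * (bernoulli N : ZMod p) := by
  have h : ∑ i ∈ range N, bernoulli i * (N.choose i * 2 ^ i : ℕ)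
      = ((2 - 2 ^ (N + 1) : ℤ) : ℚ) * bernoulli N := by
    push_cast
    simpa only [mul_assoc] using _root_.sum_range_bernoulli_mul_choose_mul_two_pow N
  have h' := congrArg (Rat.cast : ℚ → ZMod p) h
  rw [cast_sum_bernoulli_mul_natCast hN.le, cast_mul_of_mem (intCast_mem _ _)
    (bernoulli_mem_padicValuation_integer hN), Rat.cast_intCast] at h'
  push_cast at h'
  simpa only [mul_assoc] using h'

theorem neg_one_pow_div_pow_mem_padicValuation_integer {k : ℕ} (hk : ¬ p ∣ k) (a : ℕ) :
    (-1 : ℚ) ^ k / (k : ℚ) ^ a ∈ (padicValuation p).integer := by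
  rw [div_eq_mul_inv, ← inv_pow]
  exact mul_mem (pow_mem (neg_mem (one_mem _)) _)
    (pow_mem (inv_natCast_mem_padicValuation_integer hk) _)

theorem ZMod.cast_neg_one_pow_div_pow {k a : ℕ} (hk : ¬ p ∣ k) (ha : a ≤ p - 1) :
    (((-1 : ℚ) ^ k / (k : ℚ) ^ a : ℚ) : ZMod p) = (-1) ^ k * (k : ZMod p) ^ (p - 1 - a) := by
  have hka : ¬ p ∣ k ^ a := fun h => hk ((Fact.out : p.Prime).dvd_of_dvd_pow h)
  have hq : (-1 : ℚ) ^ k / (k : ℚ) ^ a = (((-1) ^ k : ℤ) : ℚ) / (k ^ a : ℕ) := by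
    push_cast; rfl
  have hinv : ((k : ZMod p) ^ a)⁻¹ = (k : ZMod p) ^ (p - 1 - a) := by
    refine inv_eq_of_mul_eq_one_right ?_
    rw [← pow_add, Nat.add_sub_cancel' ha]
    exact ZMod.pow_card_sub_one_eq_one (by rwa [Ne, ZMod.natCast_eq_zero_iff])
  rw [hq, cast_div_natCast_of_mem (intCast_mem _ _) hka, Rat.cast_intCast, div_eq_mul_inv]
  push_cast
  rw [hinv]

theorem ZMod.cast_sum_Icc_neg_one_pow_div_pow {a : ℕ} (ha : a < p - 1) :
    ((∑ k ∈ Icc 1 (p - 1), (-1 : ℚ) ^ k / (k : ℚ) ^ a : ℚ) : ZMod p)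
      = ∑ k ∈ range p, (-1) ^ k * (k : ZMod p) ^ (p - 1 - a) := by
  rw [cast_sum_of_mem fun k hk => neg_one_pow_div_pow_mem_padicValuation_integer
      (Nat.not_dvd_of_mem_Icc_one_sub_one hk) a,
    sum_congr rfl fun k hk => ZMod.cast_neg_one_pow_div_pow
      (Nat.not_dvd_of_mem_Icc_one_sub_one hk) ha.le]
  refine sum_subset (fun k hk' => mem_range.2 (by have := (mem_Icc.1 hk').2; omega))
    fun k hkp hk' => ?_
  obtain rfl : k = 0 := by simp only [mem_Icc, mem_range] at hkp hk'; omega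
  simp [Nat.sub_ne_zero_of_lt ha]

theorem ZMod.cast_sum_Icc_neg_one_pow_div_pow_three (hp : 3 < p) :
    ((∑ k ∈ Icc 1 (p - 1), (-1 : ℚ) ^ k / (k : ℚ) ^ 3 : ℚ) : ZMod p)
      = -(bernoulli (p - 3) : ZMod p) / 2 := by
  obtain ⟨n, hn⟩ : ∃ n, p = 2 * n + 1 := (Fact.out : p.Prime).odd_of_ne_two (by omega)
  obtain ⟨m, hm⟩ : ∃ m, p = m + 4 := ⟨p - 4, by omega⟩
  have hne_zero : ∀ k, 0 < k → k < p → (k : ZMod p) ≠ 0 := fun k hk hkp =>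
    (ZMod.natCast_eq_zero_iff k p).not.2 (Nat.not_dvd_of_pos_of_lt hk hkp)
  have h2 : (2 : ZMod p) ≠ 0 := by exact_mod_cast hne_zero 2 two_pos (by omega)
  have h3 : (3 : ZMod p) ≠ 0 := by exact_mod_cast hne_zero 3 three_pos (by omega)
  have hm4 : (m : ZMod p) + 4 = 0 := by
    have h : ((m + 4 : ℕ) : ZMod p) = 0 := hm ▸ ZMod.natCast_self p
    exact_mod_cast h
  have hhalf : 2 * ((n + 1 : ℕ) : ZMod p) = 1 := by
    have h : ((2 * (n + 1) : ℕ) : ZMod p) = (p : ℕ) + 1 := by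
      rw [show 2 * (n + 1) = p + 1 by omega, Nat.cast_succ]
    rw [ZMod.natCast_self, zero_add] at h
    exact_mod_cast h
  have hFermat : (2 : ZMod p) ^ (m + 3) = 1 := by
    rw [show m + 3 = p - 1 by omega]; exact ZMod.pow_card_sub_one_eq_one h2
  set β := (bernoulli (m + 1) : ZMod p)
  set A := ∑ k ∈ range p, (-1) ^ k * (k : ZMod p) ^ m
  have hA : A = 2 ^ (m + 1) * ∑ j ∈ range (n + 1), (j : ZMod p) ^ m := by
    have h := sum_range_neg_one_pow_mul_pow_add_sum_range_pow (R := ZMod p) n m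
    rwa [← hn, ZMod.sum_range_pow_eq_zero (by omega), add_zero] at h
  have hshift : ∀ i ∈ range (m + 1), 2 ^ (m + 1) * ((bernoulli i : ZMod p)
      * (m + 1).choose i * ((n + 1 : ℕ) : ZMod p) ^ (m + 1 - i))
      = (bernoulli i : ZMod p) * (m + 1).choose i * 2 ^ i := by
    intro i hi
    have h : (2 : ZMod p) ^ (m + 1 - i) * ((n + 1 : ℕ) : ZMod p) ^ (m + 1 - i) = 1 := by
      rw [← mul_pow, hhalf, one_pow]
    rw [← Nat.sub_add_cancel (mem_range.1 hi).le, pow_add, Nat.sub_add_cancel (mem_range.1 hi).le]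
    linear_combination (bernoulli i : ZMod p) * (m + 1).choose i * 2 ^ i * h
  have key : ((m : ZMod p) + 1) * A = (2 - 2 ^ (m + 2)) * β := by
    rw [hA, mul_left_comm, ZMod.mul_sum_range_pow (by omega), mul_sum, sum_congr rfl hshift,
      ZMod.sum_range_bernoulli_mul_choose_mul_two_pow (by omega)]
  rw [ZMod.cast_sum_Icc_neg_one_pow_div_pow (by omega), show p - 1 - 3 = m by omega,
    show p - 3 = m + 1 by omega, eq_div_iff h2]
  refine mul_left_cancel₀ (mul_ne_zero h2 h3) ?_
  -- `m + 1 ≡ -3` and `2 ^ (m + 2) ≡ 1 / 2` turn `key` into `-3 * A = 3 / 2 * β`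
  linear_combination (-4) * key + 4 * A * hm4 + 2 * β * hFermat

end ReductionModP

/-- For a prime `p > 3`,
`∑_{k=1}^{p-1} (-1)^k/k³ ≡ -B_{p-3}/2 (mod p)`. -/
theorem stmt_5 (p : ℕ) (hp : p.Prime) (hp3 : 3 < p) :
    (p : ℤ) ∣
      ((∑ k ∈ Finset.Icc 1 (p - 1), (-1 : ℚ) ^ k / (k : ℚ) ^ 3)
        - (-(bernoulli (p - 3)) / 2)).num := by
  have : Fact p.Prime := ⟨hp⟩
  have h2 : ¬ p ∣ 2 := fun h => by have := Nat.le_of_dvd two_pos h; omega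
  have hL :
      ∑ k ∈ Icc 1 (p - 1), (-1 : ℚ) ^ k / (k : ℚ) ^ 3 ∈ (Rat.padicValuation p).integer :=
    sum_mem fun k hk => neg_one_pow_div_pow_mem_padicValuation_integer
      (Nat.not_dvd_of_mem_Icc_one_sub_one hk) 3
  have hB := neg_mem (bernoulli_mem_padicValuation_integer (p := p) (i := p - 3) (by omega))
  have hR : -bernoulli (p - 3) / 2 ∈ (Rat.padicValuation p).integer := by
    simpa using Rat.div_natCast_mem_padicValuation_integer hB h2
  refine Rat.dvd_num_of_cast_eq_zero (sub_mem hL hR) ?_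
  have hRcast := Rat.cast_div_natCast_of_mem hB h2
  push_cast at hRcast
  rw [Rat.cast_sub_of_mem hL hR, ZMod.cast_sum_Icc_neg_one_pow_div_pow_three hp3, hRcast,
    sub_self]
end

section
/- For every positive integer n, ∑_{k=1}^{n} C(n,k)·((−1)^{k-1}/k)·H_k = H_{n,2}. -/
/-!
Write `T n = ∑ₖ C(n,k) (-1)^k H_k / k` and `A m = ∑ₖ C(m,k) (-1)^k H_k`. Pascal's rule
`C(n+1,k) = C(n,k) + C(n,k-1)` and the absorption identity `C(n,k-1) / k = C(n+1,k) / (n+1)` give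
`T (n+1) = T n + A (n+1) / (n+1)`. The same two identities, with `H_{k+1} - H_k = 1/(k+1)` and
the vanishing of the alternating binomial sum, give
`A (n+1) = -∑ₖ C(n,k) (-1)^k / (k+1) = -1/(n+1)`.
Hence `T (n+1) = T n - 1/(n+1)^2`, so `T n = -H_{n,2}`, while the sum on the left is `-T n`.
-/

open Finset

theorem sum_range_succ_eq_add_sum_Icc {M : Type*} [AddCommMonoid M] (f : ℕ → M) (n : ℕ) :
    ∑ k ∈ range (n + 1), f k = f 0 + ∑ k ∈ Icc 1 n, f k := by
  rw [range_eq_Ico, sum_eq_sum_Ico_succ_bot n.succ_pos, zero_add, Nat.succ_eq_add_one,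
    Ico_add_one_right_eq_Icc]

section Field

variable {K : Type*} [Field K] [CharZero K]

theorem cast_choose_div_add_one (n k : ℕ) :
    (n.choose k : K) / (k + 1) = (n + 1).choose (k + 1) / (n + 1) := by
  rw [div_eq_div_iff k.cast_add_one_ne_zero n.cast_add_one_ne_zero]
  norm_cast
  rw [mul_comm, n.add_one_mul_choose_eq k]

theorem sum_range_choose_mul_div_add_one (g : ℕ → K) (n : ℕ) :
    ∑ k ∈ range (n + 1), n.choose k * g (k + 1) / (k + 1)
      = (∑ k ∈ range (n + 2), (n + 1).choose k * g k - g 0) / (n + 1) := by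
  rw [sum_range_succ' (fun k ↦ ((n + 1).choose k : K) * g k), Nat.choose_zero_right, Nat.cast_one,
    one_mul, add_sub_cancel_right, sum_div]
  refine sum_congr rfl fun k _ ↦ ?_
  rw [mul_div_right_comm, cast_choose_div_add_one, div_mul_eq_mul_div]

theorem alternating_sum_choose_div_add_one (n : ℕ) :
    ∑ k ∈ range (n + 1), n.choose k * (-1 : K) ^ k / (k + 1) = 1 / (n + 1) := by
  have alternating : ∑ k ∈ range (n + 2), ((n + 1).choose k : K) * (-1) ^ k = 0 := by
    simp_rw [mul_comm (Nat.cast _)]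
    exact_mod_cast Int.alternating_sum_range_choose_of_ne n.succ_ne_zero
  have h := sum_range_choose_mul_div_add_one (fun k ↦ -(-1 : K) ^ k) n
  simp only [pow_succ, mul_neg, mul_one, neg_neg, sum_neg_distrib, pow_zero, alternating] at h
  rw [h]
  norm_num

end Field

theorem alternating_sum_choose_mul_harmonic (n : ℕ) :
    ∑ k ∈ range (n + 2), (n + 1).choose k * ((-1 : ℚ) ^ k * harmonic k) = -1 / (n + 1) := by
  rw [sum_choose_succ_mul (fun k _ ↦ (-1 : ℚ) ^ k * harmonic k), ← sum_add_distrib]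
  calc _ = -∑ k ∈ range (n + 1), n.choose k * (-1 : ℚ) ^ k / (k + 1) := by
          rw [← sum_neg_distrib]
          refine sum_congr rfl fun k _ ↦ ?_
          rw [harmonic_succ, pow_succ]
          push_cast
          ring
    _ = -1 / (n + 1) := by rw [alternating_sum_choose_div_add_one, neg_div]

theorem alternating_sum_choose_div_mul_harmonic (n : ℕ) :
    ∑ k ∈ range (n + 1), n.choose k * ((-1 : ℚ) ^ k / k * harmonic k)
      = -∑ k ∈ Icc 1 n, 1 / (k : ℚ) ^ 2 := by
  induction n with
  | zero => simp
  | succ n ih =>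
    have absorb := sum_range_choose_mul_div_add_one (fun k ↦ (-1 : ℚ) ^ k * harmonic k) n
    rw [harmonic_zero, mul_zero, sub_zero, alternating_sum_choose_mul_harmonic] at absorb
    rw [sum_choose_succ_mul (fun k _ ↦ (-1 : ℚ) ^ k / k * harmonic k), ih,
      sum_Icc_succ_top (Nat.le_add_left 1 n)]
    have shifted : ∑ k ∈ range (n + 1),
        n.choose k * ((-1 : ℚ) ^ (k + 1) / ↑(k + 1) * harmonic (k + 1)) = -1 / (n + 1) ^ 2 := by
      rw [sq, ← div_div, ← absorb]
      refine sum_congr rfl fun k _ ↦ ?_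
      push_cast
      ring
    rw [shifted]
    push_cast
    ring

theorem stmt_8_general (n : ℕ) :
    ∑ k ∈ Finset.Icc 1 n,
        (n.choose k : ℚ) * ((-1 : ℚ) ^ (k - 1) / (k : ℚ))
          * (∑ j ∈ Finset.Icc 1 k, (1 : ℚ) / j)
      = ∑ k ∈ Finset.Icc 1 n, (1 : ℚ) / (k : ℚ) ^ 2 := by
  have sign_flip : ∀ k ∈ Icc 1 n,
      (n.choose k : ℚ) * ((-1) ^ (k - 1) / k) * ∑ j ∈ Icc 1 k, 1 / (j : ℚ)
      = -(n.choose k * ((-1 : ℚ) ^ k / k * harmonic k)) := by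
    intro k hk
    obtain ⟨m, rfl⟩ := Nat.exists_eq_add_of_le' (mem_Icc.1 hk).1
    simp only [harmonic_eq_sum_Icc, one_div, Nat.add_sub_cancel, pow_succ]
    ring
  have identity := alternating_sum_choose_div_mul_harmonic n
  rw [sum_range_succ_eq_add_sum_Icc, harmonic_zero, mul_zero, mul_zero, zero_add] at identity
  rw [sum_congr rfl sign_flip, sum_neg_distrib, identity, neg_neg]

/-- For every positive integer `n`,
`∑_{k=1}^{n} C(n,k)·((-1)^{k-1}/k)·H_k = H_{n,2}`. -/
theorem stmt_8 (n : ℕ) (hn : 0 < n) :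
    ∑ k ∈ Finset.Icc 1 n,
        (n.choose k : ℚ) * ((-1 : ℚ) ^ (k - 1) / (k : ℚ))
          * (∑ j ∈ Finset.Icc 1 k, (1 : ℚ) / j)
      = ∑ k ∈ Finset.Icc 1 n, (1 : ℚ) / (k : ℚ) ^ 2 :=
  stmt_8_general n
end

section
/- Let p > 3 be a prime and let m be a positive even integer with p − 1 not dividing 3m. Then ∑_{1 ≤ j < k ≤ p-1} (1/(j^m·k^{2m}) + 1/(j^{2m}·k^m)) ≡ 0 (mod p). -/
/-!
Every summand has denominator prime to `p`, so the sum can be reduced to `ZMod p` term by term.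
There, with `a i = i⁻¹ ^ m` and `b i = i⁻¹ ^ (2m)`, the sum over `j < k` of `a j b k + b j a k`
equals `(∑ a) (∑ b) - ∑ a b`. The power sums `∑ i⁻¹ ^ r` over `(ZMod p)ˣ` vanish unless
`p - 1 ∣ r`, and `p - 1 ∤ 3m` forces both `∑ a = 0` and `∑ a b = ∑ i⁻¹ ^ (3m) = 0`.
-/

open Finset

namespace Rat

section DivisionRing

variable {α : Type*} [DivisionRing α]

lemma cast_den_add_ne_zero {q r : ℚ} (hq : (q.den : α) ≠ 0) (hr : (r.den : α) ≠ 0) :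
    ((q + r).den : α) ≠ 0 := by
  obtain ⟨c, hc⟩ := add_den_dvd q r
  intro h
  have : (q.den : α) * r.den = 0 := by rw [← Nat.cast_mul, hc, Nat.cast_mul, h, zero_mul]
  exact mul_ne_zero hq hr this

lemma cast_den_sum_ne_zero {ι : Type*} {s : Finset ι} {f : ι → ℚ}
    (h : ∀ i ∈ s, ((f i).den : α) ≠ 0) : ((∑ i ∈ s, f i).den : α) ≠ 0 := by
  classical
  induction s using Finset.induction_on with
  | empty => simp
  | insert a s ha ih =>
    rw [sum_insert ha]
    exact cast_den_add_ne_zero (h a (mem_insert_self a s))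
      (ih fun i hi => h i (mem_insert_of_mem hi))

lemma cast_sum_of_den_ne_zero {ι : Type*} {s : Finset ι} {f : ι → ℚ}
    (h : ∀ i ∈ s, ((f i).den : α) ≠ 0) : ((∑ i ∈ s, f i : ℚ) : α) = ∑ i ∈ s, (f i : α) := by
  classical
  induction s using Finset.induction_on with
  | empty => simp
  | insert a s ha ih =>
    have hs : ∀ i ∈ s, ((f i).den : α) ≠ 0 := fun i hi => h i (mem_insert_of_mem hi)
    rw [sum_insert ha, sum_insert ha,
      cast_add_of_ne_zero (h a (mem_insert_self a s)) (cast_den_sum_ne_zero hs), ih hs]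

lemma cast_den_one_div_natCast_pow_mul_pow_ne_zero {j k : ℕ} (hj : (j : α) ≠ 0)
    (hk : (k : α) ≠ 0) (a b : ℕ) : ((1 / ((j : ℚ) ^ a * (k : ℚ) ^ b)).den : α) ≠ 0 := by
  have hj0 : j ≠ 0 := by rintro rfl; exact hj Nat.cast_zero
  have hk0 : k ≠ 0 := by rintro rfl; exact hk Nat.cast_zero
  have hjk : j ^ a * k ^ b ≠ 0 := mul_ne_zero (pow_ne_zero a hj0) (pow_ne_zero b hk0)
  rw [show (1 / ((j : ℚ) ^ a * (k : ℚ) ^ b)) = ((j ^ a * k ^ b : ℕ) : ℚ)⁻¹ by push_cast; ring,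
    inv_natCast_den, if_neg hjk]
  push_cast
  exact mul_ne_zero (pow_ne_zero a hj) (pow_ne_zero b hk)

end DivisionRing

lemma cast_one_div_natCast_pow_mul_pow {K : Type*} [Field K] (j k a b : ℕ) :
    ((1 / ((j : ℚ) ^ a * (k : ℚ) ^ b) : ℚ) : K) = ((j : K)⁻¹) ^ a * ((k : K)⁻¹) ^ b := by
  rw [show (1 / ((j : ℚ) ^ a * (k : ℚ) ^ b)) = ((j ^ a * k ^ b : ℕ) : ℚ)⁻¹ by push_cast; ring,
    cast_inv_nat]
  push_cast
  rw [mul_inv, inv_pow, inv_pow]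

lemma natCast_dvd_num_of_cast_eq_zero {p : ℕ} [Fact p.Prime] {q : ℚ}
    (hden : (q.den : ZMod p) ≠ 0) (hq : (q : ZMod p) = 0) : (p : ℤ) ∣ q.num := by
  rw [cast_def, div_eq_zero_iff, or_iff_left hden] at hq
  exact (ZMod.intCast_zmod_eq_zero_iff_dvd _ _).mp hq

end Rat

lemma sum_Icc_sum_Ico_mul_add_mul {R : Type*} [CommRing R] (f g : ℕ → R) (n : ℕ) :
    ∑ k ∈ Icc 1 n, ∑ j ∈ Ico 1 k, (f j * g k + g j * f k)
      = (∑ i ∈ Icc 1 n, f i) * (∑ i ∈ Icc 1 n, g i) - ∑ i ∈ Icc 1 n, f i * g i := by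
  induction n with
  | zero => simp
  | succ n ih =>
    rw [sum_Icc_succ_top (by omega), sum_Icc_succ_top (by omega), sum_Icc_succ_top (by omega),
      sum_Icc_succ_top (by omega), ih, Ico_add_one_right_eq_Icc, sum_add_distrib, ← sum_mul,
      ← sum_mul]
    ring

namespace ZMod

variable {p : ℕ} [Fact p.Prime]

lemma natCast_ne_zero_of_mem_Icc {i : ℕ} (hi : i ∈ Icc 1 (p - 1)) : (i : ZMod p) ≠ 0 := by
  rw [mem_Icc] at hi
  rw [Ne, natCast_eq_zero_iff]
  exact Nat.not_dvd_of_pos_of_lt hi.1 (by have := (Fact.out : p.Prime).pos; omega)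

lemma sum_Icc_eq_sum_units {M : Type*} [AddCommMonoid M] (f : ZMod p → M) :
    ∑ i ∈ Icc 1 (p - 1), f i = ∑ u : (ZMod p)ˣ, f u :=
  sum_bij' (fun i hi => Units.mk0 (i : ZMod p) (natCast_ne_zero_of_mem_Icc hi))
    (fun u _ => (u : ZMod p).val)
    (fun _ _ => mem_univ _)
    (fun u _ => by
      have := val_lt (u : ZMod p)
      have := (val_ne_zero (u : ZMod p)).mpr u.ne_zero
      rw [mem_Icc]; omega)
    (fun i hi => by
      have := (mem_Icc.mp hi).2
      have := (Fact.out : p.Prime).pos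
      simp [val_cast_of_lt (by omega : i < p)])
    (fun u _ => Units.ext (natCast_zmod_val _))
    (fun _ _ => rfl)

lemma sum_Icc_inv_pow (r : ℕ) :
    ∑ i ∈ Icc 1 (p - 1), ((i : ZMod p)⁻¹) ^ r = if p - 1 ∣ r then -1 else 0 := by
  classical
  have hunits := FiniteField.sum_pow_units (ZMod p) r
  rw [card] at hunits
  rw [sum_Icc_eq_sum_units (fun x => x⁻¹ ^ r), ← hunits]
  exact Fintype.sum_equiv (Equiv.inv _) _ _ fun u => by
    rw [Equiv.inv_apply, Units.val_inv_eq_inv_val]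

end ZMod

theorem stmt_12_general (p : ℕ) (hp : p.Prime) (m : ℕ) (hdvd : ¬ (p - 1) ∣ 3 * m) :
    (p : ℤ) ∣
      (∑ k ∈ Finset.Icc 1 (p - 1), ∑ j ∈ Finset.Ico 1 k,
        (1 / ((j : ℚ) ^ m * (k : ℚ) ^ (2 * m))
          + 1 / ((j : ℚ) ^ (2 * m) * (k : ℚ) ^ m))).num := by
  have := Fact.mk hp
  have hden (a b : ℕ) {k j : ℕ} (hk : k ∈ Icc 1 (p - 1)) (hj : j ∈ Ico 1 k) :
      ((1 / ((j : ℚ) ^ a * (k : ℚ) ^ b)).den : ZMod p) ≠ 0 := by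
    have hj' : j ∈ Icc 1 (p - 1) := by simp only [mem_Icc, mem_Ico] at hk hj ⊢; omega
    exact Rat.cast_den_one_div_natCast_pow_mul_pow_ne_zero
      (ZMod.natCast_ne_zero_of_mem_Icc hj') (ZMod.natCast_ne_zero_of_mem_Icc hk) a b
  have hden_term (k : ℕ) (hk : k ∈ Icc 1 (p - 1)) (j : ℕ) (hj : j ∈ Ico 1 k) :=
    Rat.cast_den_add_ne_zero (hden m (2 * m) hk hj) (hden (2 * m) m hk hj)
  have hden_inner (k) (hk : k ∈ Icc 1 (p - 1)) := Rat.cast_den_sum_ne_zero (hden_term k hk)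
  refine Rat.natCast_dvd_num_of_cast_eq_zero (Rat.cast_den_sum_ne_zero hden_inner) ?_
  have hm : ¬ p - 1 ∣ m := fun h => hdvd (h.mul_left 3)
  calc _ = ∑ k ∈ Icc 1 (p - 1), ∑ j ∈ Ico 1 k,
        (((j : ZMod p)⁻¹) ^ m * ((k : ZMod p)⁻¹) ^ (2 * m)
          + ((j : ZMod p)⁻¹) ^ (2 * m) * ((k : ZMod p)⁻¹) ^ m) := by
        rw [Rat.cast_sum_of_den_ne_zero hden_inner]
        refine sum_congr rfl fun k hk => ?_
        rw [Rat.cast_sum_of_den_ne_zero (hden_term k hk)]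
        refine sum_congr rfl fun j hj => ?_
        rw [Rat.cast_add_of_ne_zero (hden _ _ hk hj) (hden _ _ hk hj),
          Rat.cast_one_div_natCast_pow_mul_pow, Rat.cast_one_div_natCast_pow_mul_pow]
    _ = 0 := by
      rw [sum_Icc_sum_Ico_mul_add_mul (fun i => ((i : ZMod p)⁻¹) ^ m)
        (fun i => ((i : ZMod p)⁻¹) ^ (2 * m))]
      simp only [← pow_add, show m + 2 * m = 3 * m by ring, ZMod.sum_Icc_inv_pow, if_neg hm,
        if_neg hdvd, zero_mul, sub_zero]

/-- For a prime `p > 3` and a positive even integer `m` with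
`p - 1 ∤ 3m`, we have
`∑_{1 ≤ j < k ≤ p-1} (1/(j^m·k^{2m}) + 1/(j^{2m}·k^m)) ≡ 0 (mod p)`. -/
theorem stmt_12 (p : ℕ) (hp : p.Prime) (hp3 : 3 < p) (m : ℕ) (hm : 0 < m)
    (hme : Even m) (hdvd : ¬ (p - 1) ∣ 3 * m) :
    (p : ℤ) ∣
      (∑ k ∈ Finset.Icc 1 (p - 1), ∑ j ∈ Finset.Ico 1 k,
        (1 / ((j : ℚ) ^ m * (k : ℚ) ^ (2 * m))
          + 1 / ((j : ℚ) ^ (2 * m) * (k : ℚ) ^ m))).num :=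
  stmt_12_general p hp m hdvd
end

section
/- Let p > 3 be a prime and let m be a positive even integer with p > 3m + 1. Then ∑_{1 ≤ j < k ≤ p-1} 1/(j^{2m+1}·k^{m}) ≡ ((−1)^{m}/(2m+1))·C(3m, m)·B_{p-1-3m} (mod p). -/
/-!
Everything is reduced modulo `p`. By Fermat, `1 / (j ^ (2m+1) k ^ m) ≡ j ^ a k ^ b` with
`a = p - 2m - 2`, `b = p - 1 - m`. Faulhaber's formula writes `(a + 1) ∑_{j<k} j ^ a` as
`∑_i B_i C(a+1, i) k ^ (a+1-i)`, whose coefficients are `p`-integral because `i ≤ a < p - 1`.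
Summing over `k`, the power sum `∑_k k ^ (a+1-i+b)` is `-1` if `p - 1` divides the exponent and
`0` otherwise, and only `i = p - 1 - 3m` survives. Finally `a + 1 ≡ -(2m+1)` and
`C(p-1-2m, m) ≡ (-1) ^ m C(3m, m)`.
-/

open Finset Nat

lemma natCast_self_sub_eq_neg {p x : ℕ} (h : x ≤ p) : ((p - x : ℕ) : ZMod p) = -x := by
  rw [Nat.cast_sub h, ZMod.natCast_self, zero_sub]

variable {p : ℕ} [Fact p.Prime]

/-- The cast `ℚ → ZMod p` is `num / den`; it respects the ring operations only on `p`-integral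
rationals, which is why integrality is carried along with the residue. -/
def ReducesTo (x : ℚ) (r : ZMod p) : Prop :=
  x ∈ (Rat.padicValuation p).integer ∧ (x : ZMod p) = r

lemma mem_padicValuation_integer_iff {x : ℚ} :
    x ∈ (Rat.padicValuation p).integer ↔ ¬ p ∣ x.den :=
  (Valuation.mem_integer_iff _ _).trans Rat.padicValuation_le_one_iff

lemma inv_natCast_mem_padicValuation_integer {n : ℕ} (hn : ¬ p ∣ n) :
    (n : ℚ)⁻¹ ∈ (Rat.padicValuation p).integer := by
  rw [mem_padicValuation_integer_iff, Rat.inv_natCast_den]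
  split_ifs
  · exact (Fact.out : p.Prime).not_dvd_one
  · exact hn

namespace ReducesTo

variable {x y : ℚ} {r s : ZMod p}

lemma natCast_den_ne_zero (h : ReducesTo x r) : (x.den : ZMod p) ≠ 0 := by
  rw [Ne, ZMod.natCast_eq_zero_iff]
  exact mem_padicValuation_integer_iff.mp h.1

lemma one : ReducesTo (1 : ℚ) (1 : ZMod p) := ⟨one_mem _, Rat.cast_one⟩

lemma natCast (n : ℕ) : ReducesTo (n : ℚ) (n : ZMod p) :=
  ⟨natCast_mem _ n, Rat.cast_natCast n⟩

lemma inv_natCast {n : ℕ} (hn : ¬ p ∣ n) : ReducesTo (n : ℚ)⁻¹ (n : ZMod p)⁻¹ :=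
  ⟨inv_natCast_mem_padicValuation_integer hn, Rat.cast_inv_nat n⟩

lemma neg (hx : ReducesTo x r) : ReducesTo (-x) (-r) :=
  ⟨neg_mem hx.1, by rw [Rat.cast_neg, hx.2]⟩

lemma add (hx : ReducesTo x r) (hy : ReducesTo y s) : ReducesTo (x + y) (r + s) :=
  ⟨add_mem hx.1 hy.1, by
    rw [Rat.cast_add_of_ne_zero hx.natCast_den_ne_zero hy.natCast_den_ne_zero, hx.2, hy.2]⟩

lemma sub (hx : ReducesTo x r) (hy : ReducesTo y s) : ReducesTo (x - y) (r - s) := by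
  simpa only [sub_eq_add_neg] using hx.add hy.neg

lemma mul (hx : ReducesTo x r) (hy : ReducesTo y s) : ReducesTo (x * y) (r * s) :=
  ⟨mul_mem hx.1 hy.1, by
    rw [Rat.cast_mul_of_ne_zero hx.natCast_den_ne_zero hy.natCast_den_ne_zero, hx.2, hy.2]⟩

lemma pow (hx : ReducesTo x r) (n : ℕ) : ReducesTo (x ^ n) (r ^ n) := by
  induction n with
  | zero => simpa only [pow_zero] using one
  | succ n ih => simpa only [pow_succ] using ih.mul hx

lemma sum {ι : Type*} {s : Finset ι} {f : ι → ℚ} {g : ι → ZMod p}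
    (h : ∀ i ∈ s, ReducesTo (f i) (g i)) : ReducesTo (∑ i ∈ s, f i) (∑ i ∈ s, g i) := by
  classical
  induction s using Finset.induction_on with
  | empty => simpa only [sum_empty, Nat.cast_zero] using natCast (p := p) 0
  | insert a s ha ih =>
    rw [sum_insert ha, sum_insert ha]
    exact (h a (mem_insert_self a s)).add (ih fun i hi ↦ h i (mem_insert_of_mem hi))

lemma intCast_dvd_num (h : ReducesTo x r) (hr : r = 0) : (p : ℤ) ∣ x.num := by
  have h0 := h.2
  rw [hr, Rat.cast_def, div_eq_zero_iff, or_iff_left h.natCast_den_ne_zero] at h0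
  exact (ZMod.intCast_zmod_eq_zero_iff_dvd _ _).mp h0

end ReducesTo

lemma bernoulli'_mem_padicValuation_integer {n : ℕ} (hn : n + 1 < p) :
    bernoulli' n ∈ (Rat.padicValuation p).integer := by
  induction n using Nat.strong_induction_on with
  | _ n ih =>
  rw [bernoulli'_def]
  refine sub_mem (one_mem _) (Subring.sum_mem _ fun k hk ↦ ?_)
  have hkn := mem_range.mp hk
  have hden : (n : ℚ) - k + 1 = ((n - k + 1 : ℕ) : ℚ) := by
    push_cast [Nat.cast_sub hkn.le]
    ring
  rw [hden, div_eq_mul_inv]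
  exact mul_mem (mul_mem (natCast_mem _ _)
    (inv_natCast_mem_padicValuation_integer (Nat.not_dvd_of_pos_of_lt (by omega) (by omega))))
    (ih k hkn (by omega))

lemma reducesTo_bernoulli {n : ℕ} (hn : n + 1 < p) :
    ReducesTo (bernoulli n) (bernoulli n : ZMod p) :=
  ⟨mul_mem (pow_mem (neg_mem (one_mem _)) n) (bernoulli'_mem_padicValuation_integer hn), rfl⟩

lemma sum_Icc_pow_eq_ite (n : ℕ) :
    ∑ k ∈ Icc 1 (p - 1), (k : ZMod p) ^ n = if p - 1 ∣ n then -1 else 0 := by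
  have hunits : ∑ k ∈ Icc 1 (p - 1), (k : ZMod p) ^ n = ∑ u : (ZMod p)ˣ, (u : ZMod p) ^ n :=
    sum_bij' (fun k hk ↦ Units.mk0 (k : ZMod p) (by
        rw [Ne, ZMod.natCast_eq_zero_iff]
        exact Nat.not_dvd_of_pos_of_lt (mem_Icc.mp hk).1 (by grind)))
      (fun u _ ↦ (u : ZMod p).val)
      (fun _ _ ↦ mem_univ _)
      (fun u _ ↦ by grind [u.ne_zero, ZMod.val_ne_zero, ZMod.val_lt])
      (fun k hk ↦ by simp [ZMod.val_cast_of_lt (by grind : k < p)])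
      (fun u _ ↦ Units.ext (ZMod.natCast_zmod_val _))
      (fun _ _ ↦ rfl)
  classical
  rw [hunits, FiniteField.sum_pow_units, ZMod.card]

lemma pow_sub_one_sub_eq_inv_pow (x : ZMod p) {n : ℕ} (hn₀ : 0 < n) (hn : n < p - 1) :
    x ^ (p - 1 - n) = (x ^ n)⁻¹ := by
  rcases eq_or_ne x 0 with rfl | hx
  · rw [zero_pow hn₀.ne', zero_pow (by omega), inv_zero]
  · refine eq_inv_of_mul_eq_one_left ?_
    rw [← pow_add, Nat.sub_add_cancel hn.le, ZMod.pow_card_sub_one_eq_one hx]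

lemma natCast_choose_sub_one_sub (r k : ℕ) (h : r + k < p) :
    ((p - 1 - r).choose k : ZMod p) = (-1) ^ k * (r + k).choose k := by
  have hfac : (k ! : ZMod p) ≠ 0 := by
    rw [Ne, ZMod.natCast_eq_zero_iff, (Fact.out : p.Prime).dvd_factorial]
    omega
  refine mul_left_cancel₀ hfac ?_
  have hdesc : (k ! * (p - 1 - r).choose k : ZMod p) =
      ∏ i ∈ range k, ((p - 1 - r - i : ℕ) : ZMod p) := by
    rw [← Nat.cast_prod, ← descFactorial_eq_prod_range, descFactorial_eq_factorial_mul_choose]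
    push_cast
    ring
  have hasc :
      (k ! * (r + k).choose k : ZMod p) = ∏ i ∈ range k, ((r + 1 + i : ℕ) : ZMod p) := by
    rw [← Nat.cast_prod, ← ascFactorial_eq_prod_range, ascFactorial_eq_factorial_mul_choose]
    push_cast
    ring
  have hterm :
      ∀ i ∈ range k, ((p - 1 - r - i : ℕ) : ZMod p) = -((r + 1 + i : ℕ) : ZMod p) := by
    intro i hi
    have := mem_range.mp hi
    rw [show p - 1 - r - i = p - (r + 1 + i) by omega, natCast_self_sub_eq_neg (by omega)]
  rw [hdesc, prod_congr rfl hterm, prod_neg, card_range, mul_left_comm, hasc]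

lemma natCast_succ_mul_sum_range_pow {a : ℕ} (ha : a + 1 < p) (n : ℕ) :
    ((a + 1 : ℕ) : ZMod p) * ∑ j ∈ range n, (j : ZMod p) ^ a =
      ∑ i ∈ range (a + 1),
        (bernoulli i : ZMod p) * (a + 1).choose i * (n : ZMod p) ^ (a + 1 - i) := by
  have hQ : (((a + 1) * ∑ j ∈ range n, j ^ a : ℕ) : ℚ) =
      ∑ i ∈ range (a + 1), bernoulli i * ((a + 1).choose i * n ^ (a + 1 - i) : ℕ) := by
    push_cast
    rw [sum_range_pow, mul_sum]
    refine sum_congr rfl fun i _ ↦ ?_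
    field_simp
  have h := (ReducesTo.sum fun i (hi : i ∈ range (a + 1)) ↦
    (reducesTo_bernoulli (p := p) (n := i) (by grind)).mul
      (.natCast ((a + 1).choose i * n ^ (a + 1 - i)))).2
  rw [← hQ, Rat.cast_natCast] at h
  push_cast at h ⊢
  rw [h]
  exact sum_congr rfl fun i _ ↦ by ring

lemma natCast_succ_mul_sum_sum_pow_mul_pow {a : ℕ} (ha₀ : 0 < a) (ha : a + 1 < p) (b : ℕ) :
    ((a + 1 : ℕ) : ZMod p) *
        ∑ k ∈ Icc 1 (p - 1), ∑ j ∈ Ico 1 k, (j : ZMod p) ^ a * (k : ZMod p) ^ b =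
      -∑ i ∈ range (a + 1) with p - 1 ∣ a + 1 - i + b,
        (bernoulli i : ZMod p) * (a + 1).choose i := by
  calc ((a + 1 : ℕ) : ZMod p) *
        ∑ k ∈ Icc 1 (p - 1), ∑ j ∈ Ico 1 k, (j : ZMod p) ^ a * (k : ZMod p) ^ b
      = ∑ k ∈ Icc 1 (p - 1),
          (k : ZMod p) ^ b * (((a + 1 : ℕ) : ZMod p) * ∑ j ∈ range k, (j : ZMod p) ^ a) := by
        rw [mul_sum]
        refine sum_congr rfl fun k hk ↦ ?_
        rw [sum_range_eq_add_Ico _ (mem_Icc.mp hk).1, ← sum_mul, Nat.cast_zero,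
          zero_pow ha₀.ne', zero_add]
        ring
    _ = ∑ i ∈ range (a + 1), (bernoulli i : ZMod p) * (a + 1).choose i *
          ∑ k ∈ Icc 1 (p - 1), (k : ZMod p) ^ (a + 1 - i + b) := by
        simp_rw [natCast_succ_mul_sum_range_pow ha, mul_sum]
        rw [sum_comm]
        refine sum_congr rfl fun i _ ↦ sum_congr rfl fun k _ ↦ ?_
        ring
    _ = _ := by
        simp_rw [sum_Icc_pow_eq_ite, sum_filter, ← sum_neg_distrib]
        refine sum_congr rfl fun i _ ↦ ?_
        split_ifs <;> ring

lemma natCast_mul_sum_sum_pow_mul_pow_eq {m : ℕ} (hm : 0 < m) (hpm : 3 * m + 1 < p) :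
    ((2 * m + 1 : ℕ) : ZMod p) * ∑ k ∈ Icc 1 (p - 1), ∑ j ∈ Ico 1 k,
        (j : ZMod p) ^ (p - 1 - (2 * m + 1)) * (k : ZMod p) ^ (p - 1 - m) =
      (-1) ^ m * (3 * m).choose m * bernoulli (p - 1 - 3 * m) := by
  have hfilter : {i ∈ range (p - 1 - 2 * m) | p - 1 ∣ p - 1 - 2 * m - i + (p - 1 - m)} =
      {p - 1 - 3 * m} := by
    ext i
    simp only [mem_filter, mem_range, mem_singleton]
    constructor
    · rintro ⟨hi, hdvd⟩
      have := Nat.eq_of_dvd_of_lt_two_mul (by omega) hdvd (by omega)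
      omega
    · rintro rfl
      exact ⟨by omega, 1, by omega⟩
  have hsum := natCast_succ_mul_sum_sum_pow_mul_pow (p := p) (a := p - 1 - (2 * m + 1))
    (by omega) (by omega) (p - 1 - m)
  rw [show p - 1 - (2 * m + 1) + 1 = p - 1 - 2 * m by omega, hfilter, sum_singleton,
    choose_symm_of_eq_add (by omega : p - 1 - 2 * m = p - 1 - 3 * m + m),
    natCast_choose_sub_one_sub (2 * m) m (by omega), show 2 * m + m = 3 * m by ring,
    show p - 1 - 2 * m = p - (2 * m + 1) by omega, natCast_self_sub_eq_neg (by omega)] at hsum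
  linear_combination -hsum

lemma reducesTo_sum_sum_one_div_pow_mul_pow {u v : ℕ} (hu₀ : 0 < u) (hu : u < p - 1)
    (hv₀ : 0 < v) (hv : v < p - 1) :
    ReducesTo (∑ k ∈ Icc 1 (p - 1), ∑ j ∈ Ico 1 k, 1 / ((j : ℚ) ^ u * (k : ℚ) ^ v))
      (∑ k ∈ Icc 1 (p - 1), ∑ j ∈ Ico 1 k,
        (j : ZMod p) ^ (p - 1 - u) * (k : ZMod p) ^ (p - 1 - v)) := by
  have hp := (Fact.out : p.Prime)
  refine .sum fun k hk ↦ .sum fun j hj ↦ ?_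
  have hpjk : ¬ p ∣ j ^ u * k ^ v := by
    rw [hp.dvd_mul, not_or]
    exact ⟨fun h ↦ Nat.not_dvd_of_pos_of_lt (mem_Ico.mp hj).1 (by grind) (hp.dvd_of_dvd_pow h),
      fun h ↦ Nat.not_dvd_of_pos_of_lt (mem_Icc.mp hk).1 (by grind) (hp.dvd_of_dvd_pow h)⟩
  rw [pow_sub_one_sub_eq_inv_pow _ hu₀ hu, pow_sub_one_sub_eq_inv_pow _ hv₀ hv, ← mul_inv,
    one_div]
  exact_mod_cast ReducesTo.inv_natCast hpjk

theorem stmt_18_general (p : ℕ) (hp : p.Prime) (m : ℕ) (hm : 0 < m) (hpm : 3 * m + 1 < p) :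
    (p : ℤ) ∣
      ((∑ k ∈ Finset.Icc 1 (p - 1), ∑ j ∈ Finset.Ico 1 k,
          1 / ((j : ℚ) ^ (2 * m + 1) * (k : ℚ) ^ m))
        - ((-1 : ℚ) ^ m / (2 * m + 1)) * ((3 * m).choose m : ℚ)
            * bernoulli (p - 1 - 3 * m)).num := by
  have : Fact p.Prime := ⟨hp⟩
  have hS := reducesTo_sum_sum_one_div_pow_mul_pow (p := p) (u := 2 * m + 1) (v := m)
    (by omega) (by omega) hm (by omega)
  have h2m : ¬ p ∣ 2 * m + 1 := Nat.not_dvd_of_pos_of_lt (by omega) (by omega)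
  have hC : ReducesTo
      ((-1 : ℚ) ^ m / (2 * m + 1) * ((3 * m).choose m : ℚ) * bernoulli (p - 1 - 3 * m))
      ((-1) ^ m * ((2 * m + 1 : ℕ) : ZMod p)⁻¹ * ((3 * m).choose m : ZMod p) *
        (bernoulli (p - 1 - 3 * m) : ZMod p)) := by
    rw [div_eq_mul_inv, show (2 * m + 1 : ℚ) = ((2 * m + 1 : ℕ) : ℚ) by push_cast; rfl]
    exact ((ReducesTo.one.neg.pow m).mul (.inv_natCast h2m)).mul (.natCast _) |>.mul
      (reducesTo_bernoulli (by omega))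
  refine (hS.sub hC).intCast_dvd_num ?_
  have h2m' : ((2 * m + 1 : ℕ) : ZMod p) ≠ 0 := by rwa [Ne, ZMod.natCast_eq_zero_iff]
  field_simp
  linear_combination natCast_mul_sum_sum_pow_mul_pow_eq (p := p) hm hpm

/-- For a prime `p > 3` and a positive even integer `m` with
`p > 3m + 1`, we have
`∑_{1 ≤ j < k ≤ p-1} 1/(j^{2m+1}·k^m)
  ≡ ((-1)^m/(2m+1))·C(3m, m)·B_{p-1-3m} (mod p)`. -/
theorem stmt_18 (p : ℕ) (hp : p.Prime) (hp3 : 3 < p) (m : ℕ) (hm : 0 < m)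
    (hme : Even m) (hpm : 3 * m + 1 < p) :
    (p : ℤ) ∣
      ((∑ k ∈ Finset.Icc 1 (p - 1), ∑ j ∈ Finset.Ico 1 k,
          1 / ((j : ℚ) ^ (2 * m + 1) * (k : ℚ) ^ m))
        - ((-1 : ℚ) ^ m / (2 * m + 1)) * ((3 * m).choose m : ℚ)
            * bernoulli (p - 1 - 3 * m)).num :=
  stmt_18_general p hp m hm hpm
end
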